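/- arXiv:1909.06766 — 13 statements merged into one kernel-verified Lean document; each statement's English description precedes it below -/
import Mathlib

section
/- For integers d ≥ 2 and k ≥ 2, the d-Fibonacci digraph F(d,k) is an induced subdigraph of the de Bruijn digraph B(d,k): for all vertices x, y of F(d,k), there is an arc from x to y in F(d,k) if and only if y_i = x_{i+1} for all 1 ≤ i ≤ k−1 (the de Bruijn adjacency). -/
/-- A vertex of the d-Fibonacci digraph F(d,k): a sequence x : Fin k → ZMod d
such that whenever a digit is nonzero, the next digit is its successor mod d. -/
def fibIsVertex (d k : ℕ) (x : Fin k → ZMod d) : Prop :=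
  ∀ (i : ℕ) (h : i + 1 < k),
    x ⟨i, Nat.lt_of_succ_lt h⟩ ≠ 0 →
      x ⟨i + 1, h⟩ = x ⟨i, Nat.lt_of_succ_lt h⟩ + 1

/-- The arc relation of F(d,k): y is the left shift of x, and if the last digit
of x is nonzero then the last digit of y is its successor mod d. -/
def fibArc (d k : ℕ) (x y : Fin k → ZMod d) : Prop :=
  (∀ (i : ℕ) (h : i + 1 < k), y ⟨i, Nat.lt_of_succ_lt h⟩ = x ⟨i + 1, h⟩) ∧
  (∀ h : 0 < k, x ⟨k - 1, Nat.sub_lt h Nat.one_pos⟩ ≠ 0 →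
    y ⟨k - 1, Nat.sub_lt h Nat.one_pos⟩ = x ⟨k - 1, Nat.sub_lt h Nat.one_pos⟩ + 1)

/-- For `k ≥ 2` the last-digit clause of an arc is forced by the vertex condition on `y`
at position `k - 2`, where the shift puts `x`'s last digit. -/
theorem fibArc_of_shift {d k : ℕ} (hk : 2 ≤ k) {x y : Fin k → ZMod d}
    (hy : fibIsVertex d k y)
    (hshift : ∀ (i : ℕ) (h : i + 1 < k), y ⟨i, Nat.lt_of_succ_lt h⟩ = x ⟨i + 1, h⟩) :
    fibArc d k x y := by
  refine ⟨hshift, fun _ hlast => ?_⟩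
  obtain ⟨m, rfl⟩ : ∃ m, k = m + 2 := ⟨k - 2, by omega⟩
  have hym : y ⟨m, by omega⟩ ≠ 0 := by rw [hshift m (by omega)]; exact hlast
  have hstep := hy m (by omega) hym
  rw [hshift m (by omega)] at hstep
  exact hstep

theorem fib_induced_deBruijn_general (d k : ℕ) (hk : 2 ≤ k)
    (x y : Fin k → ZMod d) (hy : fibIsVertex d k y) :
    fibArc d k x y ↔
      ∀ (i : ℕ) (h : i + 1 < k), y ⟨i, Nat.lt_of_succ_lt h⟩ = x ⟨i + 1, h⟩ :=
  ⟨And.left, fibArc_of_shift hk hy⟩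

/-- F(d,k) is an induced subdigraph of the de Bruijn digraph B(d,k):
for vertices x, y of F(d,k), there is an arc x → y in F(d,k) iff the de Bruijn
adjacency y_i = x_{i+1} holds. -/
theorem fib_induced_deBruijn (d k : ℕ) (hd : 2 ≤ d) (hk : 2 ≤ k)
    (x y : Fin k → ZMod d) (hx : fibIsVertex d k x) (hy : fibIsVertex d k y) :
    fibArc d k x y ↔
      ∀ (i : ℕ) (h : i + 1 < k), y ⟨i, Nat.lt_of_succ_lt h⟩ = x ⟨i + 1, h⟩ :=
  fib_induced_deBruijn_general d k hk x y hy
end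

section
/- For integers 2 ≤ d' ≤ d and k ≥ 1, the d'-Fibonacci digraph F(d',k) is isomorphic to an induced subdigraph of F(d,k): there exists an injective map from the vertex set of F(d',k) into the vertex set of F(d,k) such that for all vertices x, y of F(d',k), there is an arc from x to y in F(d',k) if and only if there is an arc from their images in F(d,k). -/
/-!
Relabel digits by `0 ↦ 0` and `a ↦ a + (d - d')` for `a ≠ 0`: the nonzero residues `1, …, d' - 1`
go to the top block `d - d' + 1, …, d - 1`, so the wrap-around `d' - 1 ↦ 0` of `ZMod d'` becomes
the wrap-around `d - 1 ↦ 0` of `ZMod d`. Such an injective digit map fixing `0` and commuting with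
`+ 1` on nonzero digits preserves the vertex condition and both preserves and reflects arcs when
applied coordinatewise.
-/

section DigitMap

variable {d d' k : ℕ} {g : ZMod d' → ZMod d}

theorem fibIsVertex.comp (hzero : g 0 = 0) (hsucc : ∀ a, a ≠ 0 → g (a + 1) = g a + 1)
    {x : Fin k → ZMod d'} (hx : fibIsVertex d' k x) : fibIsVertex d k (g ∘ x) := by
  intro i h hne
  have hxi : x ⟨i, by omega⟩ ≠ 0 := fun h0 => hne (by simp [h0, hzero])
  simp only [Function.comp_apply, hx i h hxi, hsucc _ hxi]

theorem fibArc_comp_iff (hg : Function.Injective g) (hzero : g 0 = 0)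
    (hsucc : ∀ a, a ≠ 0 → g (a + 1) = g a + 1) {x y : Fin k → ZMod d'} :
    fibArc d k (g ∘ x) (g ∘ y) ↔ fibArc d' k x y := by
  have hne : ∀ {a}, g a ≠ 0 ↔ a ≠ 0 := by
    intro a
    rw [← hzero, hg.ne_iff]
  simp only [fibArc, Function.comp_apply, hg.eq_iff, hne]
  refine and_congr_right fun _ => forall_congr' fun h => imp_congr_right fun hlast => ?_
  rw [← hsucc _ hlast, hg.eq_iff]

end DigitMap

def shiftDigit (d d' : ℕ) (a : ZMod d') : ZMod d :=
  if a = 0 then 0 else ((a.val + (d - d') : ℕ) : ZMod d)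

@[simp]
theorem shiftDigit_zero (d d' : ℕ) : shiftDigit d d' (0 : ZMod d') = 0 :=
  if_pos rfl

section ShiftDigit

variable {d d' : ℕ} [NeZero d'] (hdd : d' ≤ d)
include hdd

theorem val_shiftDigit (a : ZMod d') :
    (shiftDigit d d' a).val = if a = 0 then 0 else a.val + (d - d') := by
  have hlt := a.val_lt
  unfold shiftDigit
  split_ifs
  · exact ZMod.val_zero
  · exact ZMod.val_natCast_of_lt (by omega)

theorem shiftDigit_injective : Function.Injective (shiftDigit d d') := by
  intro a b hab
  have hval := congrArg ZMod.val hab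
  rw [val_shiftDigit hdd, val_shiftDigit hdd] at hval
  split_ifs at hval with ha hb hb
  · rw [ha, hb]
  · have := ZMod.val_pos.mpr hb; omega
  · have := ZMod.val_pos.mpr ha; omega
  · exact ZMod.val_injective d' (by omega)

theorem shiftDigit_add_one (a : ZMod d') (ha : a ≠ 0) :
    shiftDigit d d' (a + 1) = shiftDigit d d' a + 1 := by
  have hpos := ZMod.val_pos.mpr ha
  have hcast : a + 1 = ((a.val + 1 : ℕ) : ZMod d') := by push_cast; rw [ZMod.natCast_zmod_val]
  unfold shiftDigit
  rw [if_neg ha]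
  rcases Nat.lt_or_eq_of_le (a.val_lt : a.val + 1 ≤ d') with hlt | hwrap
  · have hval : (a + 1).val = a.val + 1 := by rw [hcast, ZMod.val_natCast_of_lt hlt]
    have hne : a + 1 ≠ 0 := fun h => by rw [h, ZMod.val_zero] at hval; omega
    rw [if_neg hne, hval]
    push_cast
    ring
  · have hzero : a + 1 = 0 := by rw [hcast, show a.val + 1 = d' by omega, ZMod.natCast_self]
    rw [if_pos hzero, ← Nat.cast_add_one, show a.val + (d - d') + 1 = d by omega, ZMod.natCast_self]

end ShiftDigit

theorem fib_induced_sub_general (d d' k : ℕ) (hd' : 2 ≤ d') (hdd : d' ≤ d) :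
    ∃ f : {x : Fin k → ZMod d' // fibIsVertex d' k x} →
          {x : Fin k → ZMod d // fibIsVertex d k x},
      Function.Injective f ∧
      ∀ x y : {x : Fin k → ZMod d' // fibIsVertex d' k x},
        fibArc d' k x.1 y.1 ↔ fibArc d k (f x).1 (f y).1 := by
  have : NeZero d' := ⟨by omega⟩
  have hzero := shiftDigit_zero d d'
  have hsucc := shiftDigit_add_one (d := d) hdd
  have hinj := shiftDigit_injective (d := d) hdd
  refine ⟨fun x => ⟨shiftDigit d d' ∘ x.1, x.2.comp hzero hsucc⟩, ?_, ?_⟩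
  · intro x y hxy
    exact Subtype.ext (hinj.comp_left (congrArg Subtype.val hxy))
  · intro x y
    exact (fibArc_comp_iff hinj hzero hsucc).symm

/-- for 2 ≤ d' ≤ d, F(d',k) is isomorphic to an induced subdigraph
of F(d,k). -/
theorem fib_induced_sub (d d' k : ℕ) (hd' : 2 ≤ d') (hdd : d' ≤ d) (hk : 1 ≤ k) :
    ∃ f : {x : Fin k → ZMod d' // fibIsVertex d' k x} →
          {x : Fin k → ZMod d // fibIsVertex d k x},
      Function.Injective f ∧
      ∀ x y : {x : Fin k → ZMod d' // fibIsVertex d' k x},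
        fibArc d' k x.1 y.1 ↔ fibArc d k (f x).1 (f y).1 :=
  fib_induced_sub_general d d' k hd' hdd
end

section
/- For integers d ≥ 2 and 1 ≤ k' ≤ k, the map φ sending a vertex x = x_1x_2…x_k of F(d,k) to its suffix x_{k−k'+1}x_{k−k'+2}…x_k is a digraph homomorphism from F(d,k) to F(d,k'): φ(x) is a vertex of F(d,k') for every vertex x of F(d,k), and whenever there is an arc from x to y in F(d,k), there is an arc from φ(x) to φ(y) in F(d,k'). -/
theorem fibIsVertex.window {d k : ℕ} {x : Fin k → ZMod d} (hx : fibIsVertex d k x)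
    (k' m : ℕ) (hm : m + k' ≤ k) :
    fibIsVertex d k' (fun i : Fin k' => x ⟨m + i.1, by omega⟩) :=
  fun i h hne => hx (m + i) (by omega) hne

theorem fibArc.suffix {d k : ℕ} {x y : Fin k → ZMod d} (hxy : fibArc d k x y)
    {k' : ℕ} (hk : k' ≤ k) :
    fibArc d k' (fun i : Fin k' => x ⟨k - k' + i.1, by omega⟩)
      (fun i : Fin k' => y ⟨k - k' + i.1, by omega⟩) := by
  refine ⟨fun i h => hxy.1 (k - k' + i) (by omega), fun h hne => ?_⟩
  simp only [show k - k' + (k' - 1) = k - 1 by omega] at hne ⊢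
  exact hxy.2 (by omega) hne

/-- the suffix map x_1…x_k ↦ x_{k-k'+1}…x_k is a digraph
homomorphism from F(d,k) to F(d,k'). -/
theorem fib_suffix_hom (d k k' : ℕ) (hkk : k' ≤ k) :
    (∀ x : Fin k → ZMod d, fibIsVertex d k x →
      fibIsVertex d k' (fun i : Fin k' => x ⟨k - k' + i.1, by have := i.isLt; omega⟩)) ∧
    (∀ x y : Fin k → ZMod d, fibIsVertex d k x → fibIsVertex d k y →
      fibArc d k x y →
      fibArc d k' (fun i : Fin k' => x ⟨k - k' + i.1, by have := i.isLt; omega⟩)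
        (fun i : Fin k' => y ⟨k - k' + i.1, by have := i.isLt; omega⟩)) :=
  ⟨fun _ hx => hx.window k' (k - k') (by omega), fun _ _ _ _ hxy => hxy.suffix hkk⟩
end

section
/- For integers d ≥ 2 and k ≥ 1, the automorphism group of the d-Fibonacci digraph F(d,k) is trivial: every bijection σ of the vertex set of F(d,k) onto itself such that there is an arc from x to y if and only if there is an arc from σ(x) to σ(y) is the identity map. -/
/-!
An automorphism must preserve the out-degree. A vertex has two out-neighbours (append `0` or
`1`) when its last digit is `0` and a single one otherwise, and along the forced out-path of a
vertex with last digit `c ≠ 0` the last digit increases by one per step until it reaches `0`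
after `(-c).val` steps; so automorphisms fix the last digit. Every vertex `x` has an
in-neighbour `w`, and the arc `w → x` says that digit `i` of `x` is digit `i + 1` of `w`;
descending induction on the position then shows that every digit is fixed.
-/

theorem RelIso.setOf_nontrivial_iff {α β : Type*} {r : α → α → Prop} {s : β → β → Prop}
    (f : r ≃r s) (a : α) : {b | s (f a) b}.Nontrivial ↔ {b | r a b}.Nontrivial := by
  have himage : {b | s (f a) b} = f '' {b | r a b} := by
    ext b
    refine ⟨fun h => ⟨f.symm b, f.map_rel_iff.1 ?_, f.apply_symm_apply b⟩, ?_⟩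
    · rwa [f.apply_symm_apply]
    · rintro ⟨c, hc, rfl⟩
      exact f.map_rel_iff.2 hc
  rw [himage, Set.image_nontrivial f.injective]

namespace FibDigraph

variable {d n : ℕ}

theorem fibIsVertex_iff {x : Fin (n + 1) → ZMod d} :
    fibIsVertex d (n + 1) x ↔ ∀ i : Fin n, x i.castSucc ≠ 0 → x i.succ = x i.castSucc + 1 :=
  ⟨fun h i => h i (by omega), fun h i hi => h ⟨i, by omega⟩⟩

theorem fibArc_iff {x y : Fin (n + 1) → ZMod d} :
    fibArc d (n + 1) x y ↔ (∀ i : Fin n, y i.castSucc = x i.succ) ∧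
      (x (Fin.last n) ≠ 0 → y (Fin.last n) = x (Fin.last n) + 1) :=
  ⟨fun h => ⟨fun i => h.1 i (by omega), h.2 (by omega)⟩,
    fun h => ⟨fun i hi => h.1 ⟨i, by omega⟩, fun _ => h.2⟩⟩

abbrev Vertex (d n : ℕ) := {x : Fin (n + 1) → ZMod d // fibIsVertex d (n + 1) x}

def Adj (d n : ℕ) (x y : Vertex d n) : Prop := fibArc d (n + 1) x.1 y.1

/-- A strengthening of `fibArc` that needs no vertex hypotheses: it forces both `x` and `y` to
be vertices. -/
def IsStep (x y : Fin (n + 1) → ZMod d) : Prop :=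
  (∀ i : Fin n, y i.castSucc = x i.succ) ∧ ∀ j, x j ≠ 0 → y j = x j + 1

theorem IsStep.fibIsVertex_left {x y : Fin (n + 1) → ZMod d} (h : IsStep x y) :
    fibIsVertex d (n + 1) x :=
  fibIsVertex_iff.2 fun i hi => (h.1 i).symm.trans (h.2 i.castSucc hi)

theorem IsStep.fibIsVertex_right {x y : Fin (n + 1) → ZMod d} (h : IsStep x y) :
    fibIsVertex d (n + 1) y :=
  fibIsVertex_iff.2 fun i hi => by
    rw [h.1 i] at hi ⊢
    exact h.2 i.succ hi

theorem IsStep.fibArc {x y : Fin (n + 1) → ZMod d} (h : IsStep x y) : fibArc d (n + 1) x y :=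
  fibArc_iff.2 ⟨h.1, h.2 (Fin.last n)⟩

theorem isStep_snoc_tail {x : Fin (n + 1) → ZMod d} (hx : fibIsVertex d (n + 1) x) {t : ZMod d}
    (ht : x (Fin.last n) ≠ 0 → t = x (Fin.last n) + 1) :
    IsStep x (Fin.snoc (Fin.tail x) t) := by
  refine ⟨fun i => Fin.snoc_castSucc .., fun j => ?_⟩
  induction j using Fin.lastCases with
  | last => simpa only [Fin.snoc_last] using ht
  | cast i => simpa only [Fin.snoc_castSucc, Fin.tail] using fibIsVertex_iff.1 hx i

theorem isStep_cons_init {x : Fin (n + 1) → ZMod d} (hx : fibIsVertex d (n + 1) x) :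
    IsStep (Fin.cons 0 (Fin.init x)) x := by
  refine ⟨fun i => by rw [Fin.cons_succ]; rfl, fun j => ?_⟩
  induction j using Fin.cases with
  | zero => simp
  | succ i => simpa only [Fin.cons_succ, Fin.init] using fibIsVertex_iff.1 hx i

theorem exists_adj_last (x : Vertex d n) {t : ZMod d}
    (ht : x.1 (Fin.last n) ≠ 0 → t = x.1 (Fin.last n) + 1) :
    ∃ y : Vertex d n, Adj d n x y ∧ y.1 (Fin.last n) = t :=
  have h := isStep_snoc_tail x.2 ht
  ⟨⟨_, h.fibIsVertex_right⟩, h.fibArc, Fin.snoc_last (α := fun _ => ZMod d) _ _⟩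

theorem exists_adj_to (x : Vertex d n) : ∃ w : Vertex d n, Adj d n w x :=
  have h := isStep_cons_init x.2
  ⟨⟨_, h.fibIsVertex_left⟩, h.fibArc⟩

theorem Adj.last_eq {x y : Vertex d n} (h : Adj d n x y) (hx : x.1 (Fin.last n) ≠ 0) :
    y.1 (Fin.last n) = x.1 (Fin.last n) + 1 :=
  (fibArc_iff.1 h).2 hx

theorem Adj.apply_castSucc {x y : Vertex d n} (h : Adj d n x y) (i : Fin n) :
    y.1 i.castSucc = x.1 i.succ :=
  (fibArc_iff.1 h).1 i

theorem Adj.eq_of_last_ne_zero {x y y' : Vertex d n} (hx : x.1 (Fin.last n) ≠ 0)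
    (hy : Adj d n x y) (hy' : Adj d n x y') : y = y' := by
  ext j
  induction j using Fin.lastCases with
  | last => rw [hy.last_eq hx, hy'.last_eq hx]
  | cast i => rw [hy.apply_castSucc, hy'.apply_castSucc]

theorem setOf_adj_nontrivial_iff [Nontrivial (ZMod d)] (x : Vertex d n) :
    {y | Adj d n x y}.Nontrivial ↔ x.1 (Fin.last n) = 0 := by
  refine ⟨fun ⟨y, hy, y', hy', hne⟩ => ?_, fun hx => ?_⟩
  · by_contra hx
    exact hne (hy.eq_of_last_ne_zero hx hy')
  · obtain ⟨y, hy, hy0⟩ := exists_adj_last x (t := 0) (absurd hx)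
    obtain ⟨y', hy', hy'1⟩ := exists_adj_last x (t := 1) (absurd hx)
    exact ⟨y, hy, y', hy', fun h => zero_ne_one (hy0.symm.trans (h ▸ hy'1))⟩

variable [Nontrivial (ZMod d)] (f : Adj d n ≃r Adj d n)
include f

theorem last_eq_zero_iff_of_relIso (x : Vertex d n) :
    (f x).1 (Fin.last n) = 0 ↔ x.1 (Fin.last n) = 0 := by
  rw [← setOf_adj_nontrivial_iff, ← setOf_adj_nontrivial_iff, f.setOf_nontrivial_iff]

theorem last_add_natCast_eq_zero_of_relIso (m : ℕ) :
    ∀ x : Vertex d n, x.1 (Fin.last n) + m = 0 → (f x).1 (Fin.last n) + m = 0 := by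
  induction m with
  | zero =>
    simpa only [Nat.cast_zero, add_zero] using fun x => (last_eq_zero_iff_of_relIso f x).2
  | succ m ih =>
    intro x hx
    by_cases hx0 : x.1 (Fin.last n) = 0
    · rw [(last_eq_zero_iff_of_relIso f x).2 hx0]
      rwa [hx0] at hx
    obtain ⟨y, hxy, hy⟩ := exists_adj_last x (t := x.1 (Fin.last n) + 1) fun _ => rfl
    have hfy := ih y (by rw [hy, ← hx]; push_cast; ring)
    have hfx0 : (f x).1 (Fin.last n) ≠ 0 := (last_eq_zero_iff_of_relIso f x).not.2 hx0
    rw [(f.map_rel_iff.2 hxy).last_eq hfx0] at hfy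
    rw [← hfy]; push_cast; ring

theorem last_apply_of_relIso [NeZero d] (x : Vertex d n) :
    (f x).1 (Fin.last n) = x.1 (Fin.last n) := by
  have h := last_add_natCast_eq_zero_of_relIso f (-x.1 (Fin.last n)).val x
  rw [ZMod.natCast_zmod_val] at h
  exact add_neg_eq_zero.1 (h (add_neg_cancel _))

theorem apply_of_relIso [NeZero d] (x : Vertex d n) : f x = x := by
  suffices h : ∀ j : Fin (n + 1), ∀ x : Vertex d n, (f x).1 j = x.1 j from
    Subtype.ext (funext fun j => h j x)
  intro j
  induction j using Fin.reverseInduction with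
  | last => exact last_apply_of_relIso f
  | cast i ih =>
    intro x
    obtain ⟨w, hwx⟩ := exists_adj_to x
    rw [(f.map_rel_iff.2 hwx).apply_castSucc, ih, hwx.apply_castSucc]

end FibDigraph

/-- the automorphism group of F(d,k) is trivial. -/
theorem fib_aut_trivial (d k : ℕ) (hd : 2 ≤ d) (hk : 1 ≤ k)
    (σ : {x : Fin k → ZMod d // fibIsVertex d k x} ≃
         {x : Fin k → ZMod d // fibIsVertex d k x})
    (hσ : ∀ x y : {x : Fin k → ZMod d // fibIsVertex d k x},
      fibArc d k x.1 y.1 ↔ fibArc d k (σ x).1 (σ y).1) :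
    ∀ x, σ x = x := by
  obtain ⟨n, rfl⟩ : ∃ n, k = n + 1 := ⟨k - 1, by omega⟩
  have : Fact (1 < d) := ⟨hd⟩
  have : NeZero d := ⟨by omega⟩
  exact FibDigraph.apply_of_relIso ⟨σ, (hσ _ _).symm⟩
end

section
/- For every integer k ≥ 1, the Fibonacci digraph F(2,k) is isomorphic to its converse via sequence reversal: the map x_1x_2…x_k ↦ x_kx_{k−1}…x_1 is a bijection of the vertex set of F(2,k) onto itself such that there is an arc from x to y in F(2,k) if and only if there is an arc from the reversal of y to the reversal of x. -/
/-!
Over `ZMod 2` a vertex is a word with no two adjacent ones, a condition invariant under reversal.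
An arc `x → y` is a left shift `y = x₁ … x_{k-1} c` whose new digit `c` must be `0` when
`x_{k-1} = 1`; the reversed arc `rev y → rev x` instead forbids `x₀ = y₀ = 1`. For a vertex `x`
and `k ≥ 2` this holds because `y₀ = x₁`, and for `k = 1` the two conditions coincide. Reversal
is an involution, so this one implication already gives the equivalence.
-/

namespace FibonacciDigraph

variable {d k : ℕ}

theorem fibIsVertex_iff (x : Fin k → ZMod d) :
    fibIsVertex d k x ↔ ∀ i j : Fin k, i.1 + 1 = j.1 → x i ≠ 0 → x j = x i + 1 := by
  refine ⟨?_, fun h i hi => h _ _ rfl⟩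
  rintro h ⟨i, -⟩ ⟨j, hj⟩ (rfl : i + 1 = j)
  exact h i hj

theorem fibArc_iff (x y : Fin k → ZMod d) :
    fibArc d k x y ↔ (∀ i j : Fin k, i.1 + 1 = j.1 → y i = x j) ∧
      ∀ i : Fin k, i.1 + 1 = k → x i ≠ 0 → y i = x i + 1 := by
  refine and_congr ⟨?_, fun h i hi => h _ _ rfl⟩ ⟨?_, ?_⟩
  · rintro h ⟨i, -⟩ ⟨j, hj⟩ (rfl : i + 1 = j)
    exact h i hj
  · rintro h ⟨i, hi⟩ (rfl : i + 1 = k)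
    exact h (Nat.succ_pos i)
  · exact fun h hk => h _ (Nat.sub_add_cancel hk)

theorem zmod_two_succ_iff (a b : ZMod 2) : (a ≠ 0 → b = a + 1) ↔ ¬(a = 1 ∧ b = 1) := by
  decide +revert

theorem fibIsVertex_two_iff (x : Fin k → ZMod 2) :
    fibIsVertex 2 k x ↔ ∀ i j : Fin k, i.1 + 1 = j.1 → ¬(x i = 1 ∧ x j = 1) := by
  simp only [fibIsVertex_iff, zmod_two_succ_iff]

theorem fibArc_two_iff (x y : Fin k → ZMod 2) :
    fibArc 2 k x y ↔ (∀ i j : Fin k, i.1 + 1 = j.1 → y i = x j) ∧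
      ∀ i : Fin k, i.1 + 1 = k → ¬(x i = 1 ∧ y i = 1) := by
  simp only [fibArc_iff, zmod_two_succ_iff]

theorem fibIsVertex_two_comp_rev {x : Fin k → ZMod 2} (hx : fibIsVertex 2 k x) :
    fibIsVertex 2 k (x ∘ Fin.rev) := by
  rw [fibIsVertex_two_iff] at hx ⊢
  rintro i j hij ⟨hi, hj⟩
  exact hx j.rev i.rev (by simp only [Fin.val_rev]; omega) ⟨hj, hi⟩

theorem fibArc_two_comp_rev {x y : Fin k → ZMod 2} (hx : fibIsVertex 2 k x)
    (hxy : fibArc 2 k x y) : fibArc 2 k (y ∘ Fin.rev) (x ∘ Fin.rev) := by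
  rw [fibIsVertex_two_iff] at hx
  rw [fibArc_two_iff] at hxy ⊢
  obtain ⟨hshift, hlast⟩ := hxy
  refine ⟨fun i j hij => (hshift j.rev i.rev (by simp only [Fin.val_rev]; omega)).symm, ?_⟩
  rintro i hi ⟨hy, hx0⟩
  have hi0 : i.rev.1 = 0 := by simp only [Fin.val_rev]; omega
  rcases Nat.lt_or_ge 1 k with hk | hk
  · have hx1 : x ⟨1, hk⟩ = 1 := hshift i.rev ⟨1, hk⟩ (by rw [hi0]) ▸ hy
    exact hx i.rev ⟨1, hk⟩ (by rw [hi0]) ⟨hx0, hx1⟩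
  · have hii : i.rev = i := Fin.ext (by simp only [Fin.val_rev]; omega)
    exact hlast i hi ⟨hii ▸ hx0, hii ▸ hy⟩

end FibonacciDigraph

open FibonacciDigraph in
/-- F(2,k) is isomorphic to its converse via sequence reversal. -/
theorem fib_self_converse (k : ℕ) :
    Set.BijOn
      (fun (x : Fin k → ZMod 2) => fun i : Fin k => x ⟨k - 1 - i.1, by omega⟩)
      {x | fibIsVertex 2 k x} {x | fibIsVertex 2 k x} ∧
    ∀ x y : Fin k → ZMod 2, fibIsVertex 2 k x → fibIsVertex 2 k y →
      (fibArc 2 k x y ↔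
        fibArc 2 k (fun i : Fin k => y ⟨k - 1 - i.1, by omega⟩)
          (fun i : Fin k => x ⟨k - 1 - i.1, by omega⟩)) := by
  have hrev (x : Fin k → ZMod 2) :
      (fun i : Fin k => x ⟨k - 1 - i.1, by omega⟩) = x ∘ Fin.rev :=
    funext fun i => congrArg x (Fin.ext (by simp only [Fin.val_rev]; omega))
  have hrev_rev (x : Fin k → ZMod 2) : (x ∘ Fin.rev) ∘ Fin.rev = x := by
    simp [Function.comp_def]
  refine ⟨?_, fun x y hx hy => ?_⟩
  · have hmaps : Set.MapsTo (· ∘ Fin.rev) {x | fibIsVertex 2 k x} {x | fibIsVertex 2 k x} :=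
      fun x hx => fibIsVertex_two_comp_rev hx
    rw [show _ = (· ∘ Fin.rev) from funext hrev]
    exact Set.InvOn.bijOn ⟨fun x _ => hrev_rev x, fun x _ => hrev_rev x⟩ hmaps hmaps
  · rw [hrev, hrev]
    refine ⟨fibArc_two_comp_rev hx, fun h => ?_⟩
    simpa only [hrev_rev] using fibArc_two_comp_rev (fibIsVertex_two_comp_rev hy) h
end

section
/- For integers d ≥ 2 and k ≥ d, the number of vertices N(d,k) of the d-Fibonacci digraph F(d,k) satisfies the d-step Fibonacci recurrence N(d,k+1) = N(d,k) + N(d,k−1) + ⋯ + N(d,k−d+1) (the sum of the d previous terms). -/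
/-- N(d,k): the number of vertices of F(d,k). -/
noncomputable def fibN (d k : ℕ) : ℕ :=
  Nat.card {x : Fin k → ZMod d // fibIsVertex d k x}

namespace FibAux

def Rel (d : ℕ) (a b : ZMod d) : Prop := a ≠ 0 → b = a + 1

def blk (d i : ℕ) : List (ZMod d) :=
  (List.range (i + 1)).map (fun j => ((d - i + j : ℕ) : ZMod d))

lemma blk_length (d i : ℕ) : (blk d i).length = i + 1 := by
  simp [blk]

lemma blk_ne_nil (d i : ℕ) : blk d i ≠ [] := by
  simp [blk, List.range_succ]

lemma blk_head? (d i : ℕ) : (blk d i).head? = some ((d - i : ℕ) : ZMod d) := by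
  cases i <;> simp [blk, List.range_succ_eq_map]

lemma blk_getLast? (d i : ℕ) (h : i ≤ d) : (blk d i).getLast? = some 0 := by
  have h1 : (blk d i).getLast? = some ((d - i + i : ℕ) : ZMod d) := by
    simp [blk, List.range_succ]
  rw [h1]
  have h2 : d - i + i = d := by omega
  rw [h2, ZMod.natCast_self]

lemma blk_zero (d : ℕ) : blk d 0 = [0] := by
  simp [blk, List.range_succ]

lemma blk_succ (d i : ℕ) (h : i + 1 ≤ d) :
    blk d (i + 1) = ((d - (i + 1) : ℕ) : ZMod d) :: blk d i := by
  unfold blk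
  rw [List.range_succ_eq_map, List.map_cons, List.map_map]
  refine congrArg₂ List.cons (by norm_num) ?_
  apply List.map_congr_left
  intro j hj
  simp only [Function.comp_apply]
  congr 1
  omega

lemma blk_chain' (d i : ℕ) (h : i ≤ d) : (blk d i).Chain' (Rel d) := by
  induction i with
  | zero => simp [blk_zero, List.isChain_singleton, List.Chain']
  | succ n ih =>
    rw [blk_succ d n h]
    unfold List.Chain'
    rw [List.isChain_cons]
    refine ⟨?_, ih (by omega)⟩
    intro y hy
    rw [blk_head? d n] at hy
    intro _
    have h1 : (y : ZMod d) = ((d - n : ℕ) : ZMod d) := by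
      simpa using hy.symm
    rw [h1]
    have h2 : d - n = (d - (n + 1)) + 1 := by omega
    rw [h2]
    push_cast
    ring

lemma cast_ne_zero (d m : ℕ) (h1 : 0 < m) (h2 : m < d) : ((m : ℕ) : ZMod d) ≠ 0 := by
  rw [Ne, ZMod.natCast_eq_zero_iff]
  intro hdvd
  have := Nat.le_of_dvd h1 hdvd
  omega

lemma forced (d : ℕ) : ∀ i, i < d → ∀ l : List (ZMod d), l.Chain' (Rel d) →
    i + 1 ≤ l.length → l.head? = some ((d - i : ℕ) : ZMod d) →
    ∃ t, l = blk d i ++ t := by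
  intro i
  induction i with
  | zero =>
    intro _ l _ hlen hhead
    match l with
    | a :: t =>
      refine ⟨t, ?_⟩
      rw [blk_zero]
      simp only [List.head?_cons, Option.some_inj] at hhead
      have : a = 0 := by rw [hhead]; simp
      simp [this]
  | succ n ih =>
    intro hnd l hch hlen hhead
    match l with
    | a :: t =>
      simp only [List.head?_cons, Option.some_inj] at hhead
      have ha : a ≠ 0 := by
        rw [hhead]
        exact cast_ne_zero d _ (by omega) (by omega)
      match t with
      | [] => simp at hlen
      | b :: t' =>
        unfold List.Chain' at hch
        rw [List.isChain_cons_cons] at hch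
        have hb : b = ((d - n : ℕ) : ZMod d) := by
          have hR := hch.1 ha
          rw [hR, hhead]
          have h2 : d - n = (d - (n + 1)) + 1 := by omega
          rw [h2]
          push_cast
          ring
        obtain ⟨t'', ht⟩ := ih (by omega) (b :: t') hch.2
          (by simp at hlen ⊢; omega) (by simp [hb])
        refine ⟨t'', ?_⟩
        rw [blk_succ d n (by omega), ← hhead]
        simp [ht]

def VL (d k : ℕ) : Type := {l : List (ZMod d) // l.length = k ∧ l.Chain' (Rel d)}

def toList (d k : ℕ) (x : {x : Fin k → ZMod d // fibIsVertex d k x}) : VL d k :=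
  ⟨List.ofFn x.1, by simp, by
    unfold List.Chain'
    rw [List.isChain_iff_getElem]
    intro i hi
    simp only [List.length_ofFn] at hi
    rw [List.getElem_ofFn, List.getElem_ofFn]
    intro hne
    exact x.2 i (by omega) hne⟩

lemma toList_bijective (d k : ℕ) : Function.Bijective (toList d k) := by
  constructor
  · intro a b h
    apply Subtype.ext
    apply List.ofFn_injective
    exact congrArg Subtype.val h
  · rintro ⟨l, hlen, hch⟩
    refine ⟨⟨fun i => l.get (Fin.cast hlen.symm i), ?_⟩, ?_⟩
    · intro i h hne
      unfold List.Chain' at hch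
      rw [List.isChain_iff_getElem] at hch
      exact hch i (by omega) hne
    · apply Subtype.ext
      apply List.ext_get (by simp [toList, hlen])
      intro n h1 h2
      simp [toList, List.getElem_ofFn]


lemma head_inj (d i i' : ℕ) (hi : i < d) (hi' : i' < d)
    (h : ((d - i : ℕ) : ZMod d) = ((d - i' : ℕ) : ZMod d)) : i = i' := by
  rw [ZMod.natCast_eq_natCast_iff] at h
  unfold Nat.ModEq at h
  by_cases h0 : i = 0 <;> by_cases h0' : i' = 0
  · omega
  · subst h0
    rw [Nat.sub_zero, Nat.mod_self, Nat.mod_eq_of_lt (by omega)] at h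
    omega
  · subst h0'
    rw [Nat.sub_zero, Nat.mod_self, Nat.mod_eq_of_lt (by omega)] at h
    omega
  · rw [Nat.mod_eq_of_lt (by omega), Nat.mod_eq_of_lt (by omega)] at h
    omega

def g (d k : ℕ) (hk : d ≤ k) (p : Σ i : Fin d, VL d (k - i.val)) : VL d (k + 1) :=
  ⟨blk d p.1.val ++ p.2.val, by
    have h1 := p.2.2.1
    have h2 := p.1.2
    rw [List.length_append, blk_length, h1]
    omega, by
    unfold List.Chain'
    rw [List.isChain_append]
    refine ⟨blk_chain' d _ (le_of_lt p.1.2), p.2.2.2, ?_⟩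
    intro x hx y hy
    rw [blk_getLast? d _ (le_of_lt p.1.2)] at hx
    simp only [Option.mem_def, Option.some_inj] at hx
    subst hx
    intro h0
    exact absurd rfl h0⟩

lemma g_bijective (d k : ℕ) (hd : 2 ≤ d) (hk : d ≤ k) : Function.Bijective (g d k hk) := by
  haveI : NeZero d := ⟨by omega⟩
  constructor
  · rintro ⟨i, l, hl, hcl⟩ ⟨i', l', hl', hcl'⟩ h
    have hval : blk d i.val ++ l = blk d i'.val ++ l' := congrArg Subtype.val h
    have hhead := congrArg List.head? hval
    rw [List.head?_append_of_ne_nil _ (blk_ne_nil d i.val),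
        List.head?_append_of_ne_nil _ (blk_ne_nil d i'.val),
        blk_head?, blk_head?, Option.some_inj] at hhead
    have hii : i.val = i'.val := head_inj d i.val i'.val i.2 i'.2 hhead
    have hii' : i = i' := Fin.ext hii
    subst hii'
    have hll : l = l' := List.append_cancel_left hval
    subst hll
    rfl
  · rintro ⟨l, hlen, hch⟩
    match l, hlen with
    | a :: t, hlen =>
      rcases eq_or_ne a 0 with ha | ha
      · -- head is zero: block index 0
        obtain ⟨u, hu⟩ := forced d 0 (by omega) (a :: t) hch (by omega)
          (by simp [ha])
        refine ⟨⟨⟨0, by omega⟩, ⟨u, ?_, ?_⟩⟩, ?_⟩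
        · show u.length = k - 0
          have := congrArg List.length hu
          rw [List.length_append, blk_length] at this
          simp at hlen this
          omega
        · have := hch
          unfold List.Chain' at this
          rw [hu, List.isChain_append] at this
          exact this.2.1
        · exact Subtype.ext hu.symm
      · -- head nonzero: block index d - a.val
        have hv0 : 0 < a.val := by
          rcases Nat.eq_zero_or_pos a.val with h0 | h0
          · exact absurd ((ZMod.val_eq_zero a).1 h0) ha
          · exact h0
        have hvd : a.val < d := ZMod.val_lt a
        have hdi : d - (d - a.val) = a.val := by omega
        obtain ⟨u, hu⟩ := forced d (d - a.val) (by omega) (a :: t) hch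
          (by simp at hlen ⊢; omega)
          (by rw [List.head?_cons, hdi, Option.some_inj]
              exact (ZMod.natCast_rightInverse a).symm)
        refine ⟨⟨⟨d - a.val, by omega⟩, ⟨u, ?_, ?_⟩⟩, ?_⟩
        · show u.length = k - (d - a.val)
          have := congrArg List.length hu
          rw [List.length_append, blk_length] at this
          simp at hlen this
          omega
        · have := hch
          unfold List.Chain' at this
          rw [hu, List.isChain_append] at this
          exact this.2.1
        · exact Subtype.ext hu.symm

end FibAux

/-- for k ≥ d, N(d,k+1) is the sum of the d previous terms. -/
theorem fibN_recurrence (d k : ℕ) (hd : 2 ≤ d) (hk : d ≤ k) :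
    fibN d (k + 1) = ∑ i ∈ Finset.range d, fibN d (k - i) := by
  haveI : NeZero d := ⟨by omega⟩
  haveI hfin : ∀ m : ℕ, Finite (FibAux.VL d m) := fun m =>
    Finite.of_surjective (FibAux.toList d m) (FibAux.toList_bijective d m).2
  haveI : ∀ i : Fin d, Fintype (FibAux.VL d (k - i.val)) := fun i => Fintype.ofFinite _
  have h1 : fibN d (k + 1) = Nat.card (FibAux.VL d (k + 1)) :=
    Nat.card_eq_of_bijective (FibAux.toList d (k + 1)) (FibAux.toList_bijective d (k + 1))
  have h2 : Nat.card (Σ i : Fin d, FibAux.VL d (k - i.val)) = Nat.card (FibAux.VL d (k + 1)) :=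
    Nat.card_eq_of_bijective (FibAux.g d k hk) (FibAux.g_bijective d k hd hk)
  have h3 : ∀ m : ℕ, fibN d m = Nat.card (FibAux.VL d m) := fun m =>
    Nat.card_eq_of_bijective (FibAux.toList d m) (FibAux.toList_bijective d m)
  rw [h1, ← h2]
  rw [Nat.card_eq_fintype_card, Fintype.card_sigma]
  rw [← Fin.sum_univ_eq_sum_range (fun i => fibN d (k - i)) d]
  congr 1
  funext i
  rw [h3 (k - i.val), Nat.card_eq_fintype_card]
end

section
/- For integers d ≥ 2, k ≥ d, and every digit j ∈ {0,1,…,d−1}, the number n_j^k of vertices x_1x_2…x_k of F(d,k) with last digit x_k = j satisfies the d-step Fibonacci recurrence n_j^{k+1} = n_j^k + n_j^{k−1} + ⋯ + n_j^{k−d+1}. -/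
/-- n_j^k: the number of vertices of F(d,k) whose last digit is j. -/
noncomputable def fibNj (d k : ℕ) (j : ZMod d) : ℕ :=
  Nat.card {x : Fin k → ZMod d // fibIsVertex d k x ∧
    ∀ h : 0 < k, x ⟨k - 1, Nat.sub_lt h Nat.one_pos⟩ = j}

/-- The chain lemma: starting from a nonzero first digit `a`, the digits of a
vertex are forced to be `a, a+1, …` as long as `a.val + t ≤ d`. -/
lemma fibChain {d k : ℕ} (hd : 2 ≤ d) (x : Fin k → ZMod d) (hx : fibIsVertex d k x)
    (h0 : 0 < k) (ha : x ⟨0, h0⟩ ≠ 0) :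
    ∀ t (ht : t < k), (x ⟨0, h0⟩).val + t ≤ d →
      x ⟨t, ht⟩ = (((x ⟨0, h0⟩).val + t : ℕ) : ZMod d) := by
  haveI : NeZero d := ⟨by omega⟩
  intro t
  induction t with
  | zero =>
    intro ht _
    simp [ZMod.natCast_val, ZMod.cast_id]
  | succ t ih =>
    intro ht hle
    have ht' : t < k := by omega
    have hval : (x ⟨0, h0⟩).val ≠ 0 := by
      simpa [ZMod.val_eq_zero] using ha
    have h1 : (x ⟨0, h0⟩).val + t < d := by omega
    have hxt := ih ht' (by omega)
    have hne : x ⟨t, ht'⟩ ≠ 0 := by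
      rw [hxt]
      intro hcon
      have := congrArg ZMod.val hcon
      rw [ZMod.val_cast_of_lt h1, ZMod.val_zero] at this
      omega
    have hstep := hx t ht hne
    rw [hstep, hxt]
    push_cast
    ring

/-- The index of a length-(k+1) vertex: `0` if the first digit is `0`, and
`d - a` if the first digit is `a ≠ 0`. -/
def fibIdx (d k : ℕ) (x : Fin (k + 1) → ZMod d) : ℕ :=
  (d - (x ⟨0, Nat.succ_pos k⟩).val) % d

/-- The tail of a length-(k+1) vertex, dropping the first `i+1` digits. -/
def fibTail (d k i : ℕ) (x : Fin (k + 1) → ZMod d) : Fin (k - i) → ZMod d :=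
  fun t => x ⟨t.val + i + 1, by omega⟩

/-- Extend a length-(k-i) vertex to a length-(k+1) vertex by prepending
the forced chain `d-i, d-i+1, …, d-1, 0`. -/
def fibExt (d k i : ℕ) (y : Fin (k - i) → ZMod d) : Fin (k + 1) → ZMod d :=
  fun t => if h : t.val ≤ i then ((d - i + t.val : ℕ) : ZMod d)
    else y ⟨t.val - (i + 1), by omega⟩

section lemmas

variable {d k i : ℕ}

lemma fibIdx_lt (hd : 2 ≤ d) (x : Fin (k + 1) → ZMod d) : fibIdx d k x < d :=
  Nat.mod_lt _ (by omega)

lemma fibTail_isVertex (x : Fin (k + 1) → ZMod d) (hx : fibIsVertex d (k + 1) x) :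
    fibIsVertex d (k - i) (fibTail d k i x) := by
  intro s hs hne
  simp only [fibTail] at hne ⊢
  have := hx (s + i + 1) (by omega) (by convert hne using 2)
  convert this using 2
  exact Fin.ext (by simp only [Fin.val_mk]; omega)

lemma fibTail_last (hi : i < d) (hk : d ≤ k) {j : ZMod d} (x : Fin (k + 1) → ZMod d)
    (hlast : x ⟨k + 1 - 1, Nat.sub_lt (Nat.succ_pos k) Nat.one_pos⟩ = j) :
    fibTail d k i x ⟨k - i - 1, Nat.sub_lt (by omega) Nat.one_pos⟩ = j := by
  simp only [fibTail]
  convert hlast using 2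
  exact Fin.ext (by simp; omega)

lemma fibExt_isVertex (hd : 2 ≤ d) (hi : i < d) (hk : d ≤ k)
    (y : Fin (k - i) → ZMod d) (hy : fibIsVertex d (k - i) y) :
    fibIsVertex d (k + 1) (fibExt d k i y) := by
  haveI : NeZero d := ⟨by omega⟩
  intro s hs hne
  simp only [fibExt] at hne ⊢
  by_cases h1 : s + 1 ≤ i
  · rw [dif_pos h1, dif_pos (by omega : s ≤ i)]
    push_cast [show d - i + (s + 1) = (d - i + s) + 1 by omega]
    ring
  · rw [dif_neg (by omega : ¬ s + 1 ≤ i)]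
    by_cases h2 : s ≤ i
    · exfalso
      rw [dif_pos h2] at hne
      apply hne
      rw [show d - i + s = d by omega]
      exact ZMod.natCast_self d
    · rw [dif_neg h2] at hne ⊢
      have := hy (s - (i + 1)) (by omega) (by convert hne using 2)
      convert this using 2
      all_goals first
        | rfl
        | exact Fin.ext (by simp only [Fin.val_mk]; omega)
        | (congr 1; exact Fin.ext (by simp only [Fin.val_mk]; omega))

lemma fibExt_last (hi : i < d) (hk : d ≤ k) {j : ZMod d} (y : Fin (k - i) → ZMod d)
    (hlast : y ⟨k - i - 1, Nat.sub_lt (by omega) Nat.one_pos⟩ = j) :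
    fibExt d k i y ⟨k + 1 - 1, Nat.sub_lt (Nat.succ_pos k) Nat.one_pos⟩ = j := by
  simp only [fibExt]
  rw [dif_neg (by simp only [Fin.val_mk]; omega : ¬ (⟨k + 1 - 1, Nat.sub_lt (Nat.succ_pos k) Nat.one_pos⟩ : Fin (k+1)).val ≤ i)]
  convert hlast using 2
  all_goals exact Fin.ext (by simp only [Fin.val_mk]; omega)

lemma fibIdx_fibExt (hd : 2 ≤ d) (hi : i < d) (hk : d ≤ k) (y : Fin (k - i) → ZMod d) :
    fibIdx d k (fibExt d k i y) = i := by
  haveI : NeZero d := ⟨by omega⟩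
  simp only [fibIdx, fibExt]
  rw [dif_pos (Nat.zero_le i)]
  rcases Nat.eq_zero_or_pos i with h0 | h0
  · subst h0
    simp [ZMod.natCast_self]
  · rw [Nat.add_zero, ZMod.val_cast_of_lt (by omega : d - i < d),
      show d - (d - i) = i by omega, Nat.mod_eq_of_lt hi]

lemma fibTail_fibExt (hi : i < d) (hk : d ≤ k) (y : Fin (k - i) → ZMod d) :
    fibTail d k i (fibExt d k i y) = y := by
  funext t
  simp only [fibTail, fibExt]
  rw [dif_neg (by simp only [Fin.val_mk]; omega : ¬ (⟨t.val + i + 1, by omega⟩ : Fin (k+1)).val ≤ i)]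
  congr 1
  exact Fin.ext (by simp only [Fin.val_mk]; omega)

lemma fibExt_fibTail (hd : 2 ≤ d) (hk : d ≤ k) (x : Fin (k + 1) → ZMod d)
    (hx : fibIsVertex d (k + 1) x) :
    fibExt d k (fibIdx d k x) (fibTail d k (fibIdx d k x) x) = x := by
  haveI : NeZero d := ⟨by omega⟩
  funext t
  have hav : (x ⟨0, Nat.succ_pos k⟩).val < d := ZMod.val_lt _
  by_cases ht : t.val ≤ fibIdx d k x
  · simp only [fibExt, fibIdx] at ht ⊢
    simp only [ht, ↓reduceDIte]
    by_cases ha : x ⟨0, Nat.succ_pos k⟩ = 0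
    · have hav0 : (x ⟨0, Nat.succ_pos k⟩).val = 0 := by rw [ha, ZMod.val_zero]
      rw [hav0, Nat.sub_zero, Nat.mod_self] at ht
      have ht0 : t = ⟨0, Nat.succ_pos k⟩ := Fin.ext (by simp only [Fin.val_mk]; omega)
      rw [hav0, Nat.sub_zero, Nat.mod_self, ht0, ha]
      simp [ZMod.natCast_self]
    · have hav1 : (x ⟨0, Nat.succ_pos k⟩).val ≠ 0 := by
        simpa [ZMod.val_eq_zero] using ha
      rw [Nat.mod_eq_of_lt (by omega)] at ht ⊢
      have := fibChain hd x hx (Nat.succ_pos k) ha t.val (by omega) (by omega)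
      rw [show (⟨t.val, by omega⟩ : Fin (k+1)) = t from Fin.ext rfl] at this
      rw [this]
      congr 1
      omega
  · simp only [fibExt, fibTail]
    rw [dif_neg ht]
    congr 1
    exact Fin.ext (by simp; omega)

end lemmas

/-- for k ≥ d and each digit j, n_j^{k+1} is the sum of the d
previous terms n_j^k, …, n_j^{k-d+1}. -/
theorem fibNj_recurrence (d k : ℕ) (hd : 2 ≤ d) (hk : d ≤ k) (j : ZMod d) :
    fibNj d (k + 1) j = ∑ i ∈ Finset.range d, fibNj d (k - i) j := by
  haveI : NeZero d := ⟨by omega⟩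
  classical
  set S : ℕ → Type := fun m => {x : Fin m → ZMod d // fibIsVertex d m x ∧
    ∀ h : 0 < m, x ⟨m - 1, Nat.sub_lt h Nat.one_pos⟩ = j} with hS
  have key : ∀ m, fibNj d m j = Nat.card (S m) := fun m => rfl
  have e : S (k + 1) ≃ (Σ i : Fin d, S (k - i.val)) :=
    { toFun := fun p => ⟨⟨fibIdx d k p.1, fibIdx_lt hd p.1⟩,
        fibTail d k (fibIdx d k p.1) p.1,
        fibTail_isVertex p.1 p.2.1,
        fun _ => fibTail_last (fibIdx_lt hd p.1) hk p.1 (p.2.2 (Nat.succ_pos k))⟩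
      invFun := fun q => ⟨fibExt d k q.1.val q.2.1,
        fibExt_isVertex hd q.1.isLt hk q.2.1 q.2.2.1,
        fun _ => fibExt_last q.1.isLt hk q.2.1
          (q.2.2.2 (Nat.sub_pos_of_lt (lt_of_lt_of_le q.1.isLt hk)))⟩
      left_inv := by
        rintro ⟨x, hx, hlast⟩
        exact Subtype.ext (fibExt_fibTail hd hk x hx)
      right_inv := by
        have hhelp : ∀ (m m' : ℕ) (_ : m = m') (u : S m) (v : S m'),
            HEq u.1 v.1 → HEq u v := by
          rintro m m' rfl u v h
          exact heq_of_eq (Subtype.ext (eq_of_heq h))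
        rintro ⟨⟨i, hi⟩, y, hy, hylast⟩
        have h1 := fibIdx_fibExt hd hi hk y
        refine Sigma.ext (Fin.ext h1) ?_
        refine hhelp _ _ (by show k - fibIdx d k (fibExt d k i y) = k - i; rw [h1]) _ _ ?_
        show HEq (fibTail d k (fibIdx d k (fibExt d k i y)) (fibExt d k i y)) y
        rw [h1]
        exact heq_of_eq (fibTail_fibExt hi hk y) }
  rw [key, Nat.card_congr e]
  haveI : ∀ m, Fintype (S m) := fun m => Fintype.ofFinite _
  rw [Nat.card_eq_fintype_card, Fintype.card_sigma]
  rw [Finset.sum_range fun i => fibNj d (k - i) j]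
  congr 1
  funext i
  rw [key, Nat.card_eq_fintype_card]
end

section
/- For integers d ≥ 2 and k ≥ 1, the diameter of the d-Fibonacci digraph F(d,k) is k + d − 2: for every pair of vertices x, y of F(d,k) there is a directed walk from x to y of length at most k + d − 2, and there exist vertices x, y such that every directed walk from x to y has length at least k + d − 2. -/
/-- There is a directed walk of length l from x to y in F(d,k). -/
def fibWalk (d k : ℕ) (x y : Fin k → ZMod d) (l : ℕ) : Prop :=
  ∃ v : ℕ → (Fin k → ZMod d), v 0 = x ∧ v l = y ∧
    (∀ i ≤ l, fibIsVertex d k (v i)) ∧ ∀ i < l, fibArc d k (v i) (v (i + 1))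

/-!
A walk of length `l` in `F(d,k)` is the same as a word `s` of length `l + k` obeying the
Fibonacci rule (a nonzero letter is followed by its successor): the `i`-th vertex of the walk
is the window `s i … s (i + k - 1)`.

Upper bound: to go from `x` to `y`, write `x`, then count up from its last letter `a` to the
first letter `b` of `y` through `a, a + 1, …, a + j = b` with `j < d`, then write `y`, letting
the letters `a` and `b` overlap with the count. This word has length `2k - 1 + j`.

Lower bound: in a word starting with `0 … 0 1` and ending with `k` zeros, the count starting at
the `1` must reach `d - 1` before any zero can appear, so the word has length at least
`2k + d - 2`.
-/

section FibWord

variable {R : Type*}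

def IsFibWord [Zero R] [One R] [Add R] (n : ℕ) (s : ℕ → R) : Prop :=
  ∀ m, m + 1 < n → s m ≠ 0 → s (m + 1) = s m + 1

theorem isFibWord_add_natCast [AddMonoidWithOne R] (a : R) (n : ℕ) :
    IsFibWord n (fun i : ℕ => a + i) := by
  intro m _ _
  push_cast
  rw [add_assoc]

theorem IsFibWord.apply_add_eq [AddMonoidWithOne R] {n p i : ℕ} {s : ℕ → R}
    (hs : IsFibWord n s) (hpi : p + i < n) (hne : ∀ j < i, s p + j ≠ 0) :
    s (p + i) = s p + i := by
  induction i with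
  | zero => simp
  | succ i ih =>
    have h : s (p + i) = s p + i := ih (by omega) fun j hj => hne j (by omega)
    rw [← add_assoc, hs (p + i) hpi (h ▸ hne i (by omega)), h, Nat.cast_succ, add_assoc]

theorem IsFibWord.shift [Zero R] [One R] [Add R] {n i k : ℕ} {s : ℕ → R}
    (hs : IsFibWord n s) (hik : i + k ≤ n) : IsFibWord k (fun m => s (i + m)) :=
  fun m hm hne => hs (i + m) (by omega) hne

theorem IsFibWord.mono [Zero R] [One R] [Add R] {m n : ℕ} {s : ℕ → R}
    (hs : IsFibWord n s) (hmn : m ≤ n) : IsFibWord m s :=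
  fun i hi hne => hs i (by omega) hne

end FibWord

section ConcatAt

variable {α : Type*}

def concatAt (n : ℕ) (s t : ℕ → α) : ℕ → α := fun m => if m < n then s m else t (m - n)

theorem concatAt_add (n i : ℕ) (s t : ℕ → α) : concatAt n s t (n + i) = t i := by
  simp [concatAt]

theorem concatAt_of_le {n m : ℕ} {s t : ℕ → α} (h : s n = t 0) (hm : m ≤ n) :
    concatAt n s t m = s m := by
  unfold concatAt
  split_ifs with hmn
  · rfl
  · rw [show m = n by omega, Nat.sub_self, h]

theorem IsFibWord.concatAt [Zero α] [One α] [Add α] {n p : ℕ} {s t : ℕ → α}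
    (hs : IsFibWord (n + 1) s) (ht : IsFibWord p t) (h : s n = t 0) :
    IsFibWord (n + p) (concatAt n s t) := by
  intro m hm hne
  by_cases hmn : m < n
  · rw [concatAt_of_le h hmn.le, concatAt_of_le h hmn] at *
    exact hs m (by omega) hne
  · obtain ⟨i, rfl⟩ := Nat.exists_eq_add_of_le (not_lt.mp hmn)
    rw [concatAt_add] at hne
    rw [add_assoc, concatAt_add, concatAt_add]
    exact ht i (by omega) hne

end ConcatAt

section FibonacciDigraph

variable {d k : ℕ}

theorem fibIsVertex_iff_isFibWord {x : Fin k → ZMod d} {s : ℕ → ZMod d}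
    (hs : ∀ j : Fin k, s j = x j) : fibIsVertex d k x ↔ IsFibWord k s := by
  refine forall_congr' fun m => forall_congr' fun hm => ?_
  rw [← hs, ← hs]

theorem fibWalk_iff (hk : 0 < k) {x y : Fin k → ZMod d} {l : ℕ} :
    fibWalk d k x y l ↔ ∃ s : ℕ → ZMod d, IsFibWord (l + k) s ∧
      (∀ j : Fin k, s j = x j) ∧ ∀ j : Fin k, s (l + j) = y j := by
  have hlast : k - 1 < k := Nat.sub_lt hk Nat.one_pos
  constructor
  · rintro ⟨v, rfl, rfl, hvert, harc⟩
    set s : ℕ → ZMod d := fun m =>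
      if h : m < k then v 0 ⟨m, h⟩ else v (m - (k - 1)) ⟨k - 1, hlast⟩ with hs
    have hwindow : ∀ i ≤ l, ∀ j : Fin k, s (i + j) = v i j := by
      intro i hi
      induction i with
      | zero => intro j; simp [hs]
      | succ i ih =>
        rintro ⟨j, hj⟩
        by_cases hj' : j + 1 < k
        · rw [(harc i (by omega)).1 j hj', ← ih (by omega)]
          simp only [add_assoc, add_comm 1 j]
        · have : j = k - 1 := by omega
          subst this
          simp only [hs, dif_neg (show ¬ i + 1 + (k - 1) < k by omega)]
          congr 1
          omega
    refine ⟨s, ?_, fun j => by simpa using hwindow 0 (by omega) j, hwindow l le_rfl⟩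
    intro m hm hne
    by_cases hmk : m + 1 < k
    · have hv0 := (fibIsVertex_iff_isFibWord fun j => by simpa using hwindow 0 (by omega) j).mp
        (hvert 0 (Nat.zero_le l))
      exact hv0 m hmk hne
    · obtain ⟨i, rfl⟩ : ∃ i, m = i + (k - 1) := ⟨m - (k - 1), by omega⟩
      have h0 := hwindow i (by omega) ⟨k - 1, hlast⟩
      have h1 := hwindow (i + 1) (by omega) ⟨k - 1, hlast⟩
      rw [show i + (k - 1) + 1 = i + 1 + (k - 1) by omega, h1]
      rw [h0] at hne ⊢
      exact (harc i (by omega)).2 hk hne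
  · rintro ⟨s, hs, hx, hy⟩
    refine ⟨fun i j => s (i + j), funext fun j => by simpa using hx j, funext hy, ?_, ?_⟩
    · intro i hi
      exact (fibIsVertex_iff_isFibWord fun j => rfl).mpr (hs.shift (by omega))
    · refine fun i hi => ⟨fun j hj => ?_, fun _ hne => ?_⟩
      · simp only [add_assoc, add_comm 1 j]
      · simp only [show i + 1 + (k - 1) = i + (k - 1) + 1 by omega]
        exact hs _ (by omega) hne

theorem exists_fibWalk_le [NeZero d] (hk : 0 < k) {x y : Fin k → ZMod d}
    (hx : fibIsVertex d k x) (hy : fibIsVertex d k y) :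
    ∃ l ≤ k + d - 2, fibWalk d k x y l := by
  set x' : ℕ → ZMod d := Function.extend Fin.val x 0
  set y' : ℕ → ZMod d := Function.extend Fin.val y 0
  have hxx' : ∀ j : Fin k, x' j = x j := Fin.val_injective.extend_apply x 0
  have hyy' : ∀ j : Fin k, y' j = y j := Fin.val_injective.extend_apply y 0
  set a := x' (k - 1)
  set j := (y' 0 - a).val
  set count : ℕ → ZMod d := fun i => a + i
  set tail := concatAt j count y'
  have hjoin : count j = y' 0 := by simp [count, j]
  have htail : IsFibWord (j + k) tail :=
    (isFibWord_add_natCast a (j + 1)).concatAt ((fibIsVertex_iff_isFibWord hyy').mp hy) hjoin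
  have htail0 : x' (k - 1) = tail 0 := by simp [tail, concatAt_of_le hjoin, count, a]
  have hword : IsFibWord (k - 1 + (j + k)) (concatAt (k - 1) x' tail) :=
    ((fibIsVertex_iff_isFibWord hxx').mp hx |>.mono (by omega)).concatAt htail htail0
  refine ⟨k - 1 + j, by have := ZMod.val_lt (y' 0 - a); omega, (fibWalk_iff hk).mpr
    ⟨concatAt (k - 1) x' tail, by rw [add_assoc]; exact hword, fun i => ?_, fun i => ?_⟩⟩
  · rw [concatAt_of_le htail0 (by omega), hxx']
  · rw [add_assoc, concatAt_add]
    exact (concatAt_add j i count y').trans (hyy' i)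

theorem le_of_fibWalk_zero (hd : 2 ≤ d) (hk : 0 < k) {x : Fin k → ZMod d} {l : ℕ}
    (hx : x ⟨k - 1, Nat.sub_lt hk Nat.one_pos⟩ = 1) (hl : fibWalk d k x 0 l) :
    k + d - 2 ≤ l := by
  obtain ⟨s, hs, hsx, hs0⟩ := (fibWalk_iff hk).mp hl
  have hcount_ne : ∀ n : ℕ, n + 1 < d → 1 + (n : ZMod d) ≠ 0 := by
    intro n hn h
    rw [← Nat.cast_one, ← Nat.cast_add, ZMod.natCast_eq_zero_iff] at h
    exact absurd (Nat.le_of_dvd (by omega) h) (by omega)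
  have hs1 : s (k - 1) = 1 := (hsx ⟨k - 1, _⟩).trans hx
  by_contra! hlt
  -- the first position that is both in the final zero block and in the count `1, 2, …, d - 1`
  set p := max l (k - 1)
  have hcount : s (k - 1 + (p - (k - 1))) = 1 + (p - (k - 1) : ℕ) := by
    rw [hs.apply_add_eq (by omega) fun n hn => hs1 ▸ hcount_ne n (by omega), hs1]
  have hzero : s (l + (p - l)) = 0 := hs0 ⟨p - l, by omega⟩
  rw [show l + (p - l) = k - 1 + (p - (k - 1)) by omega, hcount] at hzero
  exact hcount_ne _ (by omega) hzero

end FibonacciDigraph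

/-- the diameter of F(d,k) is k + d − 2. -/
theorem fib_diameter (d k : ℕ) (hd : 2 ≤ d) (hk : 1 ≤ k) :
    (∀ x y : Fin k → ZMod d, fibIsVertex d k x → fibIsVertex d k y →
      ∃ l ≤ k + d - 2, fibWalk d k x y l) ∧
    (∃ x y : Fin k → ZMod d, fibIsVertex d k x ∧ fibIsVertex d k y ∧
      ∀ l : ℕ, fibWalk d k x y l → k + d - 2 ≤ l) := by
  have : NeZero d := ⟨by omega⟩
  refine ⟨fun x y hx hy => exists_fibWalk_le hk hx hy,
    fun j => if (j : ℕ) = k - 1 then 1 else 0, 0, ?_, fun _ _ h => absurd rfl h,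
    fun l => le_of_fibWalk_zero hd hk (by simp)⟩
  intro i hi hne
  simp [show i ≠ k - 1 by omega] at hne
end

section
/- For every integer k ≥ 2, let ℓ = 2k − 2 if k is odd and ℓ = 2k − 1 if k is even. Then the Fibonacci digraph F(2,k) is (1,ℓ)-pancyclic: for every integer p with 1 ≤ p ≤ ℓ, F(2,k) contains a directed cycle of length p, that is, vertices v_0, v_1, …, v_{p−1}, pairwise distinct, with an arc from v_j to v_{j+1} for 0 ≤ j < p−1 and an arc from v_{p−1} to v_0. -/
namespace FibPan

/-- The comb condition: position `c` (within one period `[0,p)`) carries a `1`. -/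
def C (p r c : ℕ) : Prop := p ≤ c + 2 * r ∧ (p - 1 - c) % 2 = 0

instance (p r c : ℕ) : Decidable (C p r c) := by unfold C; infer_instance

/-- One period of the comb word. -/
def S (p r c : ℕ) : ZMod 2 := if C p r c then 1 else 0

/-- The periodic comb sequence. -/
def sf (p r x : ℕ) : ZMod 2 := S p r (x % p)

lemma S_one {p r c : ℕ} (h : C p r c) : S p r c = 1 := if_pos h

lemma S_zero {p r c : ℕ} (h : ¬ C p r c) : S p r c = 0 := if_neg h

lemma sf_eval (p r x : ℕ) : sf p r x = S p r (x % p) := rfl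

lemma sf_add_p (p r x : ℕ) : sf p r (x + p) = sf p r x := by
  unfold sf; rw [Nat.add_mod_right]

lemma sf_add_mod (p r x y : ℕ) : sf p r (x + y) = S p r ((x % p + y) % p) := by
  unfold sf; rw [Nat.mod_add_mod]

lemma sf_modleft (p r x y : ℕ) : sf p r (x % p + y) = sf p r (x + y) := by
  unfold sf; rw [Nat.mod_add_mod]

lemma sf_modright (p r x y : ℕ) : sf p r (x + y % p) = sf p r (x + y) := by
  unfold sf; rw [Nat.add_mod_mod]

lemma modv {p m v : ℕ} (hv : v < p) (h : m = v ∨ m = v + p) : m % p = v := by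
  rcases h with h | h <;> subst h
  · exact Nat.mod_eq_of_lt hv
  · rw [Nat.add_mod_right]; exact Nat.mod_eq_of_lt hv

/-- No two consecutive ones in the comb sequence. -/
lemma no_consec {p r : ℕ} (hp0 : 0 < p) (h2r : 2 * r ≤ p) (x : ℕ)
    (h : sf p r x ≠ 0) : sf p r x = 1 ∧ sf p r (x + 1) = 0 := by
  have hcp : x % p < p := Nat.mod_lt _ hp0
  have hC : C p r (x % p) := by
    by_contra hn
    exact h (by rw [sf_eval, S_zero hn])
  obtain ⟨h1, h2⟩ := hC
  constructor
  · rw [sf_eval, S_one ⟨h1, h2⟩]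
  · rw [sf_add_mod]
    by_cases hc1 : x % p + 1 < p
    · rw [Nat.mod_eq_of_lt hc1]
      exact S_zero (by rintro ⟨u1, u2⟩; omega)
    · rw [modv hp0 (Or.inr (by omega))]
      exact S_zero (by rintro ⟨u1, u2⟩; omega)

/-- Key determinism helper: equal windows with contradictory next symbols is impossible. -/
lemma det_aux {p r k : ℕ} (hr : 1 ≤ r) (hrk : 2 * r ≤ k) (hkp : k < p)
    (hpk : p < 2 * r + k) (a b : ℕ)
    (hw : ∀ i, i < k → sf p r (a + i) = sf p r (b + i))
    (hc : C p r ((a + k) % p)) (hc' : ¬ C p r ((b + k) % p)) : False := by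
  have hp0 : 0 < p := by omega
  set c := (a + k) % p with hcdef
  set c' := (b + k) % p with hc'def
  have hcp : c < p := Nat.mod_lt _ hp0
  have hc'p : c' < p := Nat.mod_lt _ hp0
  have key : ∀ (x i : ℕ), i < k →
      sf p r (x + (k - 1 - i)) = S p r (((x + k) % p + (p - 1 - i)) % p) := by
    intro x i hi
    have h1 : x + (k - 1 - i) + p = (x + k) + (p - 1 - i) := by omega
    rw [← sf_add_p p r (x + (k - 1 - i)), h1, sf_add_mod]
  have E : ∀ i, i < k →
      S p r ((c + (p - 1 - i)) % p) = S p r ((c' + (p - 1 - i)) % p) := by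
    intro i hi
    have e1 := key a i hi
    have e2 := key b i hi
    have e3 := hw (k - 1 - i) (by omega)
    rw [e1, e2] at e3
    rw [hcdef, hc'def]
    exact e3
  obtain ⟨hc1, hc2⟩ := hc
  have hcne : ¬ (p ≤ c' + 2 * r ∧ (p - 1 - c') % 2 = 0) := hc'
  -- c ≥ 1 always
  have hcge1 : 1 ≤ c := by omega
  by_cases hI : c' = 0 ∨ p + 1 ≤ c' + 2 * r
  · -- Case I: witness i = 0
    have e := E 0 (by omega)
    rw [modv (show c - 1 < p by omega) (Or.inr (by omega))] at e
    rcases hI with h0 | h0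
    · rw [h0, modv (show p - 1 < p by omega) (Or.inl (by omega))] at e
      rw [S_zero (by rintro ⟨u1, u2⟩; omega), S_one ⟨by omega, by omega⟩] at e
      exact absurd e (by decide)
    · have hc'2 : 2 ≤ c' := by omega
      rw [modv (show c' - 1 < p by omega) (Or.inr (by omega))] at e
      have hpar : (p - 1 - c') % 2 = 1 := by
        rcases Nat.mod_two_eq_zero_or_one (p - 1 - c') with h | h
        · exact absurd ⟨by omega, h⟩ hc'
        · exact h
      rw [S_zero (by rintro ⟨u1, u2⟩; omega), S_one ⟨by omega, by omega⟩] at e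
      exact absurd e (by decide)
  · push_neg at hI
    obtain ⟨hc'1, hc'2⟩ := hI
    -- now 1 ≤ c' and c' + 2r ≤ p
    by_cases hII : c + 2 * r = p + 1
    · -- Case II: witness i = c'
      have hc'k : c' < k := by omega
      have e := E c' hc'k
      rw [modv (show p - 2 * r - c' < p by omega) (Or.inr (by omega))] at e
      rw [modv (show p - 1 < p by omega) (Or.inl (by omega))] at e
      rw [S_zero (by rintro ⟨u1, u2⟩; omega), S_one ⟨by omega, by omega⟩] at e
      exact absurd e (by decide)
    · -- c + 2r ≥ p + 3 (parity forces it)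
      have hc3 : p + 3 ≤ c + 2 * r := by omega
      by_cases hIII : 2 ≤ c'
      · -- Case III: witness i = 1
        have e := E 1 (by omega)
        rw [modv (show c - 2 < p by omega) (Or.inr (by omega))] at e
        rw [modv (show c' - 2 < p by omega) (Or.inr (by omega))] at e
        rw [S_one ⟨by omega, by omega⟩, S_zero (by rintro ⟨u1, u2⟩; omega)] at e
        exact absurd e (by decide)
      · -- Case IV: c' = 1, witness i = c + 2r - p
        have hc'eq : c' = 1 := by omega
        have hi4 : c + 2 * r - p < k := by omega
        have e := E (c + 2 * r - p) hi4
        rw [modv (show p - 2 * r - 1 < p by omega) (Or.inr (by omega))] at e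
        rw [modv (show 2 * p - 2 * r - c < p by omega) (Or.inl (by omega))] at e
        rw [S_zero (by rintro ⟨u1, u2⟩; omega), S_one ⟨by omega, by omega⟩] at e
        exact absurd e (by decide)

/-- Determinism: equal windows of length k determine the next symbol. -/
lemma det {p r k : ℕ} (hr : 1 ≤ r) (hrk : 2 * r ≤ k) (hkp : k < p)
    (hpk : p < 2 * r + k) (a b : ℕ)
    (hw : ∀ i, i < k → sf p r (a + i) = sf p r (b + i)) :
    sf p r (a + k) = sf p r (b + k) := by
  by_cases hc : C p r ((a + k) % p) <;> by_cases hc' : C p r ((b + k) % p)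
  · rw [sf_eval, sf_eval, S_one hc, S_one hc']
  · exact (det_aux hr hrk hkp hpk a b hw hc hc').elim
  · exact (det_aux hr hrk hkp hpk b a (fun i hi => (hw i hi).symm) hc' hc).elim
  · rw [sf_eval, sf_eval, S_zero hc, S_zero hc']

/-- Propagation: equal windows extend to equality everywhere. -/
lemma ext_all {p r k a b : ℕ} (hk : 0 < k)
    (hdet : ∀ a b, (∀ i, i < k → sf p r (a + i) = sf p r (b + i)) →
      sf p r (a + k) = sf p r (b + k))
    (H : ∀ i, i < k → sf p r (a + i) = sf p r (b + i)) :
    ∀ i, sf p r (a + i) = sf p r (b + i) := by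
  intro i
  induction i using Nat.strong_induction_on with
  | _ i ih =>
    by_cases h : i < k
    · exact H i h
    · have hd := hdet (a + (i - k)) (b + (i - k)) (fun j hj => by
        have e := ih ((i - k) + j) (by omega)
        have e1 : a + (i - k) + j = a + ((i - k) + j) := by omega
        have e2 : b + (i - k) + j = b + ((i - k) + j) := by omega
        rw [e1, e2]; exact e)
      have e1 : a + (i - k) + k = a + i := by omega
      have e2 : b + (i - k) + k = b + i := by omega
      rwa [e1, e2] at hd

/-- Recover the position from full equality of the sequences. -/
lemma inj_final {p r : ℕ} (hr : 1 ≤ r) (h2r : 2 * r ≤ p)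
    (hp2 : 2 ≤ r → 2 * r + 1 ≤ p) {a b : ℕ} (ha : a < p) (hb : b < p)
    (H : ∀ x, sf p r (a + x) = sf p r (b + x)) : a = b := by
  have hp0 : 0 < p := by omega
  set x0 := (p - 2 * r + 1) + (p - a) with hx0
  have h1 : a + x0 = (p - 2 * r + 1) + p := by omega
  have hA : sf p r (a + x0) = S p r (p - 2 * r + 1) := by
    rw [h1, sf_add_p, sf_eval, Nat.mod_eq_of_lt (by omega)]
  have hd := H x0
  rw [hA, sf_eval] at hd
  set d := (b + x0) % p with hdd
  have hdp : d < p := Nat.mod_lt _ hp0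
  have hCd : C p r d := by
    by_contra hn
    rw [S_one ⟨by omega, by omega⟩, S_zero hn] at hd
    exact absurd hd (by decide)
  obtain ⟨hd1, hd2⟩ := hCd
  rcases (show d = p - 2 * r + 1 ∨ p - 2 * r + 3 ≤ d by omega) with he | he
  · have hmm : (a + x0) % p = (b + x0) % p := by
      rw [h1, Nat.add_mod_right, Nat.mod_eq_of_lt (show p - 2 * r + 1 < p by omega),
        ← hdd, he]
    have h2 : a ≡ b [MOD p] := Nat.ModEq.add_right_cancel' x0 hmm
    unfold Nat.ModEq at h2
    rwa [Nat.mod_eq_of_lt ha, Nat.mod_eq_of_lt hb] at h2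
  · have hr2 : 2 ≤ r := by omega
    have hp' : 2 * r + 1 ≤ p := hp2 hr2
    have hd3 := H (x0 + (p - 2))
    have hL : a + (x0 + (p - 2)) = (p - 2 * r - 1) + p + p := by omega
    have hLs : sf p r (a + (x0 + (p - 2))) = S p r (p - 2 * r - 1) := by
      rw [hL, sf_add_p, sf_add_p, sf_eval, Nat.mod_eq_of_lt (by omega)]
    have hRs : sf p r (b + (x0 + (p - 2))) = S p r (d - 2) := by
      have e : b + (x0 + (p - 2)) = (b + x0) + (p - 2) := by omega
      rw [e, sf_add_mod, ← hdd, modv (show d - 2 < p by omega) (Or.inr (by omega))]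
    rw [hLs, hRs, S_zero (by rintro ⟨u1, u2⟩; omega), S_one ⟨by omega, by omega⟩] at hd3
    exact absurd hd3 (by decide)

end FibPan

open FibPan in
/-- F(2,k) is (1,ℓ)-pancyclic, with ℓ = 2k−2 for odd k and
ℓ = 2k−1 for even k: it contains a directed cycle of every length 1 ≤ p ≤ ℓ. -/
theorem fib_semi_pancyclic (k : ℕ) (hk : 2 ≤ k) (p : ℕ) (hp1 : 1 ≤ p)
    (hp2 : p ≤ if k % 2 = 1 then 2 * k - 2 else 2 * k - 1) :
    ∃ v : Fin p → (Fin k → ZMod 2),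
      Function.Injective v ∧
      (∀ i : Fin p, fibIsVertex 2 k (v i)) ∧
      ∀ i : Fin p, fibArc 2 k (v i) (v ⟨(i.1 + 1) % p, Nat.mod_lt _ (by omega)⟩) := by
  have hp0 : 0 < p := hp1
  have hpk' : p < 2 * (k / 2) + k := by
    split at hp2 <;> omega
  obtain ⟨r, h2r, hB, hA⟩ : ∃ r : ℕ, 2 * r ≤ p ∧
      (k < p → (1 ≤ r ∧ 2 * r ≤ k ∧ p < 2 * r + k)) ∧
      (p ≤ k → 2 ≤ p → r = 1) := by
    by_cases h : k < p
    · exact ⟨k / 2, by omega, fun _ => ⟨by omega, by omega, hpk'⟩, fun h' _ => by omega⟩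
    · by_cases h1 : p = 1
      · exact ⟨0, by omega, fun h' => by omega, fun _ h2 => by omega⟩
      · exact ⟨1, by omega, fun h' => by omega, fun _ _ => rfl⟩
  refine ⟨fun j i => sf p r (j.1 + i.1), ?_, ?_, ?_⟩
  · -- injectivity
    intro j j' hjj
    have hw : ∀ i, i < k → sf p r (j.1 + i) = sf p r (j'.1 + i) := by
      intro i hi
      exact congrFun hjj ⟨i, hi⟩
    apply Fin.ext
    by_cases hp1' : p = 1
    · have := j.isLt; have := j'.isLt; omega
    · have hp2' : 2 ≤ p := by omega
      by_cases hkp : k < p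
      · obtain ⟨hr1, hrk, hpkB⟩ := hB hkp
        have H := ext_all (show 0 < k by omega)
          (fun a b => det hr1 hrk hkp hpkB a b) hw
        exact inj_final hr1 h2r (fun _ => by omega) j.isLt j'.isLt H
      · have hpk2 : p ≤ k := by omega
        have hr1 : r = 1 := hA hpk2 hp2'
        have H : ∀ x, sf p r (j.1 + x) = sf p r (j'.1 + x) := by
          intro x
          rw [← sf_modright p r j.1 x, ← sf_modright p r j'.1 x]
          exact hw (x % p) (lt_of_lt_of_le (Nat.mod_lt _ hp0) hpk2)
        exact inj_final (by omega) h2r (fun h => by omega) j.isLt j'.isLt H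
  · -- vertex condition
    intro j i h hne
    obtain ⟨h1, h2⟩ := no_consec hp0 h2r (j.1 + i) hne
    show sf p r (j.1 + (i + 1)) = sf p r (j.1 + i) + 1
    have e : j.1 + (i + 1) = (j.1 + i) + 1 := by omega
    rw [e, h1, h2]; decide
  · -- arc condition
    intro j
    constructor
    · intro i h
      show sf p r ((j.1 + 1) % p + i) = sf p r (j.1 + (i + 1))
      rw [sf_modleft]
      congr 1
      omega
    · intro hk0 hne
      obtain ⟨h1, h2⟩ := no_consec hp0 h2r (j.1 + (k - 1)) hne
      show sf p r ((j.1 + 1) % p + (k - 1)) = sf p r (j.1 + (k - 1)) + 1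
      rw [sf_modleft]
      have e : j.1 + 1 + (k - 1) = (j.1 + (k - 1)) + 1 := by omega
      rw [e, h1, h2]; decide
end

section
/- For integers d ≥ 2 and k ≥ 1, let N = N(d,k) be the number of vertices of F(d,k) and let A(k) be its adjacency matrix. Then the characteristic polynomial of A(k) equals x^{N−d} · (x^d − x^{d−1} − x^{d−2} − ⋯ − 1); in particular, the spectrum of F(d,k) consists of the d zeros of x^d − x^{d−1} − ⋯ − 1 together with the eigenvalue 0 with multiplicity N − d. -/
attribute [local instance] Classical.propDecidable

/-- The adjacency matrix A(k) of F(d,k), with entry 1 for an arc and 0 otherwise. -/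
noncomputable def fibAdjMatrix (d k : ℕ) [NeZero d] :
    Matrix {x : Fin k → ZMod d // fibIsVertex d k x}
           {x : Fin k → ZMod d // fibIsVertex d k x} ℤ :=
  fun x y => if fibArc d k x.1 y.1 then 1 else 0

/-!
For `k ≥ 1`, splitting a vertex of `F(d,k+1)` into its first and last `k` digits identifies it with
an arc of `F(d,k)`, and two such vertices are adjacent exactly when the arcs are consecutive: `F(d,k+1)`
is the line digraph of `F(d,k)`. With the source and target incidence matrices `S` and `T`, the
adjacency matrices are `Sᵀ T` and `T Sᵀ`, whose characteristic polynomials agree up to a power of `X`.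
This reduces the theorem to `k = 1`, where `A(1)`, suitably reindexed, is the transpose of the
companion matrix of `X^d - X^(d-1) - ⋯ - 1`.
-/

open Polynomial

theorem AdjoinRoot.minpoly_root_of_monic {R : Type*} [CommRing R] {g : R[X]} (hg : g.Monic) :
    minpoly R (AdjoinRoot.root g) = g := by
  nontriviality R
  refine eq_of_monic_of_dvd_of_natDegree_le hg (minpoly.monic ?_) ?_ ?_
  · exact (AdjoinRoot.powerBasis' hg).isIntegral_gen
  · rw [← AdjoinRoot.mk_eq_zero, ← AdjoinRoot.aeval_eq, minpoly.aeval]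
  · exact ((AdjoinRoot.powerBasis' hg).natDegree_minpoly).le

theorem Fin.snoc_mk {k : ℕ} {α : Type*} (u : Fin k → α) (a : α) (i : ℕ) (hi : i < k + 1) :
    (Fin.snoc u a : Fin (k + 1) → α) ⟨i, hi⟩ = if h : i < k then u ⟨i, h⟩ else a := by
  simp [Fin.snoc]

def lineRel {V : Type*} (r : V → V → Prop) (e f : {p : V × V // r p.1 p.2}) : Prop :=
  e.1.2 = f.1.1

namespace Matrix

variable {R : Type*} [CommRing R]

-- The matrix of multiplication by `X` on `R[X] ⧸ (X ^ n - ∑ i, c i * X ^ i)` in the basis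
-- `1, X, …, X ^ (n - 1)`.
def companion {n : ℕ} (c : Fin n → R) : Matrix (Fin n) (Fin n) R :=
  of fun i j => if (j : ℕ) + 1 = n then c i else if (i : ℕ) = j + 1 then 1 else 0

theorem charpoly_companion {n : ℕ} (c : Fin n → R) :
    (companion c).charpoly = X ^ n - ∑ i, C (c i) * X ^ (i : ℕ) := by
  set g : R[X] := X ^ n - ∑ i, C (c i) * X ^ (i : ℕ)
  have hg : g.Monic := monic_X_pow_sub (degree_sum_fin_lt c)
  nontriviality R
  have hdeg : g.natDegree = n := by
    apply natDegree_eq_of_degree_eq_some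
    rw [degree_sub_eq_left_of_degree_lt] <;> rw [degree_X_pow]
    exact degree_sum_fin_lt c
  have := hg.free_adjoinRoot
  have := hg.finite_adjoinRoot
  let pb := AdjoinRoot.powerBasis' hg
  let b := pb.basis.reindex (finCongr hdeg)
  have hb : ∀ i, b i = AdjoinRoot.root g ^ (i : ℕ) := fun _ => by
    simp only [b, pb, Module.Basis.reindex_apply, PowerBasis.coe_basis, AdjoinRoot.powerBasis'_gen]
    rfl
  have hroot : AdjoinRoot.root g ^ n = ∑ i, c i • b i := by
    have h : aeval (AdjoinRoot.root g) g = 0 := by rw [AdjoinRoot.aeval_eq, AdjoinRoot.mk_self]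
    simp only [g, map_sub, sub_eq_zero, map_pow, aeval_X, map_sum, map_mul, aeval_C] at h
    simpa only [hb, Algebra.smul_def] using h
  have hmat : LinearMap.toMatrix b b (Algebra.lmul R _ (AdjoinRoot.root g)) = companion c := by
    ext i j
    rw [LinearMap.toMatrix_apply, Algebra.coe_lmul_eq_mul, LinearMap.mul_apply', hb, ← pow_succ',
      companion, of_apply]
    split_ifs with hj hi
    · rw [hj, hroot, b.repr_sum_self]
    · rw [← hb ⟨j + 1, by omega⟩, b.repr_self, Finsupp.single_apply, if_pos (Fin.ext hi.symm)]
    · rw [← hb ⟨j + 1, by omega⟩, b.repr_self, Finsupp.single_apply,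
        if_neg fun h => hi (congrArg Fin.val h).symm]
  rw [← hmat, LinearMap.charpoly_toMatrix, ← LinearMap.charpoly_toMatrix _ pb.basis,
    ← Algebra.leftMulMatrix_apply]
  exact (charpoly_leftMulMatrix pb).trans (AdjoinRoot.minpoly_root_of_monic hg)

variable {V W : Type*} [Fintype V] [DecidableEq V]

theorem charpoly_submatrix_equiv [Fintype W] [DecidableEq W] (M : Matrix V V R) (e : W ≃ V) :
    (M.submatrix e e).charpoly = M.charpoly :=
  charpoly_reindex e.symm M

def ofRel (R : Type*) [Zero R] [One R] (r : V → V → Prop) [DecidableRel r] : Matrix V V R :=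
  of fun u v => if r u v then 1 else 0

theorem charpoly_ofRel_lineRel (r : V → V → Prop) [DecidableRel r] :
    X ^ Fintype.card V * (ofRel R (lineRel r)).charpoly =
      X ^ Fintype.card {p : V × V // r p.1 p.2} * (ofRel R r).charpoly := by
  let src : Matrix {p : V × V // r p.1 p.2} V R := of fun e v => if e.1.1 = v then 1 else 0
  let tgt : Matrix {p : V × V // r p.1 p.2} V R := of fun e v => if e.1.2 = v then 1 else 0
  have hline : ofRel R (lineRel r) = tgt * srcᵀ := by
    ext e f
    simp [ofRel, lineRel, tgt, src, mul_apply, eq_comm]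
  have hrel : ofRel R r = srcᵀ * tgt := by
    ext u v
    simp only [ofRel, tgt, src, mul_apply, transpose_apply, of_apply, mul_ite, mul_one, mul_zero]
    split_ifs with h
    · rw [Fintype.sum_eq_single ⟨(u, v), h⟩ fun e he => ?_]
      · simp
      · rw [ite_eq_right_iff, ite_eq_right_iff]
        exact fun h2 h1 => absurd (Subtype.ext (Prod.ext h1 h2)) he
    · refine (Finset.sum_eq_zero fun e _ => ?_).symm
      rw [ite_eq_right_iff, ite_eq_right_iff]
      rintro rfl rfl
      exact absurd e.2 h
  rw [hline, hrel]
  exact charpoly_mul_comm' tgt srcᵀ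

end Matrix

abbrev FibVertex (d k : ℕ) := {x : Fin k → ZMod d // fibIsVertex d k x}

section LineDigraph

variable {d k : ℕ}

theorem fibIsVertex_init {z : Fin (k + 1) → ZMod d} (hz : fibIsVertex d (k + 1) z) :
    fibIsVertex d k (Fin.init z) :=
  fun i _ => hz i (by omega)

theorem fibIsVertex_tail {z : Fin (k + 1) → ZMod d} (hz : fibIsVertex d (k + 1) z) :
    fibIsVertex d k (Fin.tail z) :=
  fun i _ => hz (i + 1) (by omega)

theorem fibArc_init_tail (hk : 1 ≤ k) {z : Fin (k + 1) → ZMod d}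
    (hz : fibIsVertex d (k + 1) z) : fibArc d k (Fin.init z) (Fin.tail z) :=
  ⟨fun _ _ => rfl, fun _ => hz (k - 1) (by omega)⟩

theorem fibIsVertex_snoc (hk : 1 ≤ k) {u v : Fin k → ZMod d} (hu : fibIsVertex d k u)
    (huv : fibArc d k u v) : fibIsVertex d (k + 1) (Fin.snoc u (v ⟨k - 1, by omega⟩)) := by
  intro i hi
  rw [Fin.snoc_mk, Fin.snoc_mk, dif_pos (by omega : i < k)]
  by_cases hik : i + 1 < k
  · rw [dif_pos hik]
    exact hu i hik
  · obtain rfl : i = k - 1 := by omega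
    rw [dif_neg hik]
    exact huv.2 (by omega)

theorem tail_snoc_of_fibArc (hk : 1 ≤ k) {u v : Fin k → ZMod d} (huv : fibArc d k u v) :
    Fin.tail (Fin.snoc u (v ⟨k - 1, by omega⟩) : Fin (k + 1) → ZMod d) = v := by
  funext ⟨i, hi⟩
  rw [Fin.tail, Fin.succ_mk, Fin.snoc_mk]
  split_ifs with h
  · exact (huv.1 i h).symm
  · congr 1
    ext
    simp only
    omega

def fibVertexSuccEquivArc (hk : 1 ≤ k) :
    FibVertex d (k + 1) ≃ {p : FibVertex d k × FibVertex d k // fibArc d k p.1.1 p.2.1} where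
  toFun z := ⟨(⟨Fin.init z.1, fibIsVertex_init z.2⟩, ⟨Fin.tail z.1, fibIsVertex_tail z.2⟩),
    fibArc_init_tail hk z.2⟩
  invFun p := ⟨Fin.snoc p.1.1.1 (p.1.2.1 ⟨k - 1, by omega⟩), fibIsVertex_snoc hk p.1.1.2 p.2⟩
  left_inv z := by
    refine Subtype.ext ?_
    dsimp only
    conv_rhs => rw [← Fin.snoc_init_self z.1]
    congr 1
    refine congrArg z.1 (Fin.ext ?_)
    simp only [Fin.val_succ, Fin.val_last]
    omega
  right_inv p := by
    refine Subtype.ext (Prod.ext (Subtype.ext ?_) (Subtype.ext ?_))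
    · dsimp only
      exact Fin.init_snoc _ _
    · exact tail_snoc_of_fibArc hk p.2

theorem fibArc_succ_iff (hk : 1 ≤ k) (z w : FibVertex d (k + 1)) :
    fibArc d (k + 1) z.1 w.1 ↔ Fin.tail z.1 = Fin.init w.1 := by
  constructor
  · rintro ⟨hshift, -⟩
    funext ⟨i, hi⟩
    exact (hshift i (by omega)).symm
  · intro h
    refine ⟨fun i hi => (congrFun h ⟨i, by omega⟩).symm, fun _ hz => ?_⟩
    obtain ⟨j, rfl⟩ : ∃ j, k = j + 1 := ⟨k - 1, by omega⟩
    have hlast : z.1 ⟨j + 1, by omega⟩ = w.1 ⟨j, by omega⟩ := congrFun h ⟨j, by omega⟩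
    change z.1 ⟨j + 1, _⟩ ≠ 0 at hz
    change w.1 ⟨j + 1, _⟩ = z.1 ⟨j + 1, _⟩ + 1
    rw [hlast] at hz ⊢
    exact w.2 j (by omega) hz

theorem fibAdjMatrix_eq_ofRel [NeZero d] :
    fibAdjMatrix d k = Matrix.ofRel ℤ (fun u v : FibVertex d k => fibArc d k u.1 v.1) := rfl

theorem fibAdjMatrix_succ [NeZero d] (hk : 1 ≤ k) :
    fibAdjMatrix d (k + 1) =
      (Matrix.ofRel ℤ (lineRel fun u v : FibVertex d k => fibArc d k u.1 v.1)).submatrix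
        (fibVertexSuccEquivArc hk) (fibVertexSuccEquivArc hk) := by
  ext z w
  simp [fibAdjMatrix, Matrix.ofRel, lineRel, fibArc_succ_iff hk, fibVertexSuccEquivArc]

theorem charpoly_fibAdjMatrix_succ [NeZero d] (hk : 1 ≤ k) :
    X ^ Nat.card (FibVertex d k) * (fibAdjMatrix d (k + 1)).charpoly =
      X ^ Nat.card (FibVertex d (k + 1)) * (fibAdjMatrix d k).charpoly := by
  rw [fibAdjMatrix_succ hk, Matrix.charpoly_submatrix_equiv, fibAdjMatrix_eq_ofRel,
    Nat.card_eq_fintype_card, Nat.card_eq_fintype_card,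
    Fintype.card_congr (fibVertexSuccEquivArc hk)]
  exact Matrix.charpoly_ofRel_lineRel _

end LineDigraph

section BaseCase

variable {d k : ℕ}

def fibVertexOneEquiv (d : ℕ) : ZMod d ≃ FibVertex d 1 where
  toFun a := ⟨fun _ => a, fun _ h => absurd h (by omega)⟩
  invFun x := x.1 0
  left_inv _ := rfl
  right_inv x := Subtype.ext (funext fun i => congrArg x.1 (Subsingleton.elim _ _))

-- `i ↦ i + 1` sends the index of the full last column of the companion matrix to the vertex `0`,
-- the one with an arc to every vertex.
def finEquivFibVertexOne (d : ℕ) [NeZero d] : Fin d ≃ FibVertex d 1 :=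
  ((ZMod.finEquiv d).toEquiv.trans (Equiv.addRight 1)).trans (fibVertexOneEquiv d)

theorem fibArc_one_iff {x y : Fin 1 → ZMod d} : fibArc d 1 x y ↔ (x 0 ≠ 0 → y 0 = x 0 + 1) :=
  ⟨fun h => h.2 one_pos, fun h => ⟨fun _ hi => absurd hi (by omega), fun _ => h⟩⟩

theorem fibAdjMatrix_one_submatrix [NeZero d] :
    (fibAdjMatrix d 1).submatrix (finEquivFibVertexOne d) (finEquivFibVertexOne d) =
      (Matrix.companion fun _ : Fin d => (1 : ℤ)).transpose := by
  have hsucc (i j : Fin d) : (i + 1 ≠ 0 → j = i + 1) ↔ (i : ℕ) + 1 = d ∨ (j : ℕ) = i + 1 := by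
    obtain ⟨n, rfl⟩ := Nat.exists_eq_add_one_of_ne_zero (NeZero.ne d)
    simp only [ne_eq, Fin.ext_iff, Fin.val_add_one, Fin.val_last, Fin.val_zero]
    split_ifs with h
    · simp [h]
    · simp only [not_false_eq_true, forall_const]
      omega
  ext i j
  let φ := ZMod.finEquiv d
  change (if fibArc d 1 (fun _ => φ i + 1) (fun _ => φ j + 1) then 1 else 0) = _
  rw [fibArc_one_iff, add_left_inj, ← map_one φ, ← map_add, map_ne_zero_iff φ φ.injective,
    φ.injective.eq_iff, hsucc, Matrix.transpose_apply, Matrix.companion, Matrix.of_apply]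
  split_ifs <;> tauto

theorem charpoly_fibAdjMatrix_one [NeZero d] :
    (fibAdjMatrix d 1).charpoly = X ^ d - ∑ i ∈ Finset.range d, X ^ i := by
  rw [← Matrix.charpoly_submatrix_equiv _ (finEquivFibVertexOne d), fibAdjMatrix_one_submatrix,
    Matrix.charpoly_transpose, Matrix.charpoly_companion]
  simp [Fin.sum_univ_eq_sum_range (fun i => (X : ℤ[X]) ^ i)]

theorem card_fibVertex_one : Nat.card (FibVertex d 1) = d := by
  rw [← Nat.card_congr (fibVertexOneEquiv d), Nat.card_zmod]

theorem le_card_fibVertex [NeZero d] (hk : 1 ≤ k) : d ≤ Nat.card (FibVertex d k) := by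
  let f : ZMod d → FibVertex d k := fun a =>
    ⟨fun i => if (i : ℕ) = k - 1 then a else 0,
      fun i h hi => absurd (if_neg (show i ≠ k - 1 by omega)) hi⟩
  have hf : Function.Injective f := fun a b hab => by
    simpa [f] using congrFun (congrArg Subtype.val hab) ⟨k - 1, by omega⟩
  simpa using Nat.card_le_card_of_injective f hf

end BaseCase

theorem fib_charpoly_general (d k : ℕ) [NeZero d] (hk : 1 ≤ k) :
    (fibAdjMatrix d k).charpoly =
      Polynomial.X ^ (Nat.card {x : Fin k → ZMod d // fibIsVertex d k x} - d) *
        (Polynomial.X ^ d - ∑ i ∈ Finset.range d, Polynomial.X ^ i) := by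
  induction k, hk using Nat.le_induction with
  | base => rw [charpoly_fibAdjMatrix_one, card_fibVertex_one, Nat.sub_self, pow_zero, one_mul]
  | succ k hk ih =>
    have hNk : d ≤ Nat.card (FibVertex d k) := le_card_fibVertex hk
    have hNk' : d ≤ Nat.card (FibVertex d (k + 1)) := le_card_fibVertex (by omega)
    refine mul_left_cancel₀ (pow_ne_zero (Nat.card (FibVertex d k)) X_ne_zero) ?_
    rw [charpoly_fibAdjMatrix_succ hk, ih, ← mul_assoc, ← mul_assoc, ← pow_add, ← pow_add]
    congr 2
    dsimp only [FibVertex] at hNk hNk' ⊢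
    omega

/-- the characteristic polynomial of A(k) is
x^{N−d}(x^d − x^{d−1} − ⋯ − 1), where N = N(d,k); so the spectrum of F(d,k)
consists of the d zeros of x^d − x^{d−1} − ⋯ − 1 plus N − d zero eigenvalues. -/
theorem fib_charpoly (d k : ℕ) [NeZero d] (hd : 2 ≤ d) (hk : 1 ≤ k) :
    (fibAdjMatrix d k).charpoly =
      Polynomial.X ^ (Nat.card {x : Fin k → ZMod d // fibIsVertex d k x} - d) *
        (Polynomial.X ^ d - ∑ i ∈ Finset.range d, Polynomial.X ^ i) :=
  fib_charpoly_general d k hk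
end

section
/- For integers d ≥ 2, k ≥ 1, and every integer l ≥ 1, the number of closed l-walks in F(d,k) equals the number of closed l-walks in T_d; that is, tr(A(k)^l) = tr(R^l), where A(k) is the adjacency matrix of F(d,k) and R is the adjacency matrix of T_d. -/
attribute [local instance] Classical.propDecidable

/-- The adjacency matrix R of T_d: row 0 is all ones, and row i (i ≠ 0) is the
unit vector e_{i+1 mod d}. -/
def tMat (d : ℕ) : Matrix (Fin d) (Fin d) ℤ :=
  fun i j => if i.1 = 0 then 1 else if j.1 = (i.1 + 1) % d then 1 else 0

/-! ### Auxiliary material -/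

abbrev FVtx (d k : ℕ) := {x : Fin k → ZMod d // fibIsVertex d k x}

/-- `(X*Y)^(s+1) = X * ((Y*X)^s * Y)` for rectangular matrices. -/
lemma matrix_mul_pow {m n : Type*} [Fintype m] [Fintype n] [DecidableEq m] [DecidableEq n]
    (X : Matrix m n ℤ) (Y : Matrix n m ℤ) : ∀ s : ℕ,
    (X * Y) ^ (s + 1) = X * ((Y * X) ^ s * Y)
  | 0 => by simp
  | s + 1 => by
    rw [pow_succ', matrix_mul_pow X Y s, pow_succ']
    simp [Matrix.mul_assoc]

lemma trace_pow_mul_comm {m n : Type*} [Fintype m] [Fintype n] [DecidableEq m] [DecidableEq n]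
    (X : Matrix m n ℤ) (Y : Matrix n m ℤ) (s : ℕ) :
    ((X * Y) ^ (s + 1)).trace = ((Y * X) ^ (s + 1)).trace := by
  rw [matrix_mul_pow, Matrix.trace_mul_comm, pow_succ, Matrix.mul_assoc]

lemma trace_pow_submatrix {m n : Type*} [Fintype m] [Fintype n] [DecidableEq m] [DecidableEq n]
    (M : Matrix n n ℤ) (e : m ≃ n) (l : ℕ) :
    ((M.submatrix e e) ^ l).trace = (M ^ l).trace := by
  have hpow : ∀ s : ℕ, (M.submatrix e e) ^ s = (M ^ s).submatrix e e := by
    intro s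
    induction s with
    | zero => simp [Matrix.submatrix_one_equiv]
    | succ s ih => rw [pow_succ, pow_succ, ih, Matrix.submatrix_mul_equiv]
  rw [hpow]
  simp only [Matrix.trace, Matrix.diag, Matrix.submatrix_apply]
  exact Fintype.sum_equiv e _ _ (fun i => rfl)

lemma init_vertex {d k : ℕ} {e : Fin (k + 1) → ZMod d} (he : fibIsVertex d (k + 1) e) :
    fibIsVertex d k (Fin.init e) :=
  fun i h => he i (Nat.lt_succ_of_lt h)

lemma tail_vertex {d k : ℕ} {e : Fin (k + 1) → ZMod d} (he : fibIsVertex d (k + 1) e) :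
    fibIsVertex d k (Fin.tail e) :=
  fun i h => he (i + 1) (Nat.succ_lt_succ h)

noncomputable def bMat (d k : ℕ) [NeZero d] : Matrix (FVtx d k) (FVtx d (k + 1)) ℤ :=
  fun v e => if Fin.init e.1 = v.1 then 1 else 0

noncomputable def cMat (d k : ℕ) [NeZero d] : Matrix (FVtx d (k + 1)) (FVtx d k) ℤ :=
  fun e v => if Fin.tail e.1 = v.1 then 1 else 0

lemma cMat_mul_bMat (d k : ℕ) [NeZero d] :
    cMat d (k + 1) * bMat d (k + 1) = fibAdjMatrix d (k + 2) := by
  ext e f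
  rw [Matrix.mul_apply]
  have hterm : ∀ v : FVtx d (k + 1), cMat d (k + 1) e v * bMat d (k + 1) v f
      = if v = (⟨Fin.tail e.1, tail_vertex e.2⟩ : FVtx d (k + 1))
          then (if Fin.init f.1 = Fin.tail e.1 then (1 : ℤ) else 0) else 0 := by
    intro v
    simp only [cMat, bMat]
    by_cases h : v = (⟨Fin.tail e.1, tail_vertex e.2⟩ : FVtx d (k + 1))
    · subst h; simp
    · have h' : ¬(Fin.tail e.1 = v.1) := fun hh => h (Subtype.ext hh.symm)
      simp [h', h]
  rw [Finset.sum_congr rfl fun v _ => hterm v,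
    Finset.sum_ite_eq' Finset.univ _ (fun _ => if Fin.init f.1 = Fin.tail e.1 then (1 : ℤ) else 0)]
  simp only [Finset.mem_univ, if_true, fibAdjMatrix]
  by_cases harc : fibArc d (k + 2) e.1 f.1
  · rw [if_pos harc, if_pos]
    funext i
    exact harc.1 i.1 (Nat.succ_lt_succ i.2)
  · rw [if_neg harc, if_neg]
    intro hcond
    apply harc
    constructor
    · intro i hi
      exact congrFun hcond ⟨i, Nat.lt_of_succ_lt_succ hi⟩
    · intro _ hne
      have hne' : e.1 ⟨k + 1, by omega⟩ ≠ 0 := hne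
      show f.1 ⟨k + 1, by omega⟩ = e.1 ⟨k + 1, by omega⟩ + 1
      have hkk : f.1 ⟨k, by omega⟩ = e.1 ⟨k + 1, by omega⟩ :=
        congrFun hcond ⟨k, by omega⟩
      rw [← hkk] at hne' ⊢
      exact f.2 k (by omega) hne'

lemma bMat_mul_cMat (d k : ℕ) [NeZero d] :
    bMat d (k + 1) * cMat d (k + 1) = fibAdjMatrix d (k + 1) := by
  ext v w
  rw [Matrix.mul_apply, fibAdjMatrix]
  by_cases harc : fibArc d (k + 1) v.1 w.1
  · rw [if_pos harc]
    have hvert : fibIsVertex d (k + 2) (Fin.snoc v.1 (w.1 ⟨k, by omega⟩)) := by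
      intro i hi hne
      by_cases hik : i + 1 < k + 1
      · have e1 : (⟨i, Nat.lt_of_succ_lt hi⟩ : Fin (k + 2))
            = Fin.castSucc ⟨i, Nat.lt_of_succ_lt hik⟩ := rfl
        have e2 : (⟨i + 1, hi⟩ : Fin (k + 2)) = Fin.castSucc ⟨i + 1, hik⟩ := rfl
        rw [e1, Fin.snoc_castSucc] at hne
        rw [e1, e2, Fin.snoc_castSucc, Fin.snoc_castSucc]
        exact v.2 i hik hne
      · have hik' : i = k := by omega
        have e1 : (⟨i, Nat.lt_of_succ_lt hi⟩ : Fin (k + 2))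
            = Fin.castSucc ⟨k, by omega⟩ := by
          apply Fin.ext; simpa using hik'
        have e2 : (⟨i + 1, hi⟩ : Fin (k + 2)) = Fin.last (k + 1) := by
          apply Fin.ext; simp [Fin.last]; omega
        rw [e1, Fin.snoc_castSucc] at hne
        rw [e1, e2, Fin.snoc_castSucc, Fin.snoc_last]
        exact harc.2 (by omega) hne
    have hinit : Fin.init (Fin.snoc v.1 (w.1 ⟨k, by omega⟩) : Fin (k + 2) → ZMod d) = v.1 := by
      funext i
      exact Fin.snoc_castSucc (α := fun _ => ZMod d) (w.1 ⟨k, by omega⟩) v.1 i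
    have htail : Fin.tail (Fin.snoc v.1 (w.1 ⟨k, by omega⟩) : Fin (k + 2) → ZMod d) = w.1 := by
      funext i
      show (Fin.snoc v.1 (w.1 ⟨k, by omega⟩) : Fin (k + 2) → ZMod d) i.succ = w.1 i
      by_cases hik : i.1 < k
      · have e : (i.succ : Fin (k + 2)) = Fin.castSucc ⟨i.1 + 1, by omega⟩ := rfl
        rw [e, Fin.snoc_castSucc]
        exact (harc.1 i.1 (by omega)).symm
      · have hik' : i = ⟨k, by omega⟩ := by
          apply Fin.ext; have := i.2; simp; omega
        rw [hik']
        have e : ((⟨k, by omega⟩ : Fin (k + 1)).succ : Fin (k + 2)) = Fin.last (k + 1) := rfl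
        rw [e, Fin.snoc_last]
    have hterm : ∀ e : FVtx d (k + 2), bMat d (k + 1) v e * cMat d (k + 1) e w
        = if e = (⟨Fin.snoc v.1 (w.1 ⟨k, by omega⟩), hvert⟩ : FVtx d (k + 2))
            then (1 : ℤ) else 0 := by
      intro e
      simp only [bMat, cMat]
      by_cases h : e = (⟨Fin.snoc v.1 (w.1 ⟨k, by omega⟩), hvert⟩ : FVtx d (k + 2))
      · rw [h]
        simp [hinit, htail, h]
      · rw [if_neg h]
        by_cases h1 : Fin.init e.1 = v.1
        · by_cases h2 : Fin.tail e.1 = w.1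
          · exfalso
            apply h
            apply Subtype.ext
            have hlast : e.1 (Fin.last (k + 1)) = w.1 ⟨k, by omega⟩ := by
              rw [← h2]; rfl
            calc e.1 = Fin.snoc (Fin.init e.1) (e.1 (Fin.last (k + 1))) :=
                  (Fin.snoc_init_self e.1).symm
              _ = Fin.snoc v.1 (w.1 ⟨k, by omega⟩) := by rw [h1, hlast]
          · simp [h2]
        · simp [h1]
    rw [Finset.sum_congr rfl fun e _ => hterm e,
      Finset.sum_ite_eq' Finset.univ _ (fun _ => (1 : ℤ))]
    simp
  · rw [if_neg harc]
    apply Finset.sum_eq_zero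
    intro e _
    simp only [bMat, cMat]
    by_cases h1 : Fin.init e.1 = v.1
    · by_cases h2 : Fin.tail e.1 = w.1
      · exfalso
        apply harc
        constructor
        · intro i hi
          rw [← h1, ← h2]
          rfl
        · intro _ hne
          rw [← h1] at hne
          rw [← h1, ← h2]
          exact e.2 k (by omega) hne
      · simp [h2]
    · simp [h1]

/-- The reindexing equivalence between vertices of F(d,1) and Fin d. -/
noncomputable def epsEquiv (d : ℕ) [NeZero d] : FVtx d 1 ≃ Fin d where
  toFun x := ⟨(x.1 0).val, ZMod.val_lt _⟩
  invFun j := ⟨fun _ => (j.1 : ZMod d), fun i h => absurd h (by omega)⟩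
  left_inv x := by
    apply Subtype.ext
    funext i
    have hi : i = 0 := Subsingleton.elim _ _
    subst hi
    simp [ZMod.natCast_val, ZMod.cast_id]
  right_inv j := by
    apply Fin.ext
    simp [ZMod.val_natCast_of_lt j.2]

lemma base_entry (d : ℕ) [NeZero d] (hd : 2 ≤ d) (x y : FVtx d 1) :
    fibAdjMatrix d 1 x y = tMat d (epsEquiv d x) (epsEquiv d y) := by
  simp only [fibAdjMatrix, tMat, epsEquiv, Equiv.coe_fn_mk]
  show (if fibArc d 1 x.1 y.1 then (1 : ℤ) else 0) = if (x.1 0).val = 0 then 1 else if (y.1 0).val = ((x.1 0).val + 1) % d then 1 else 0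
  by_cases h0 : x.1 0 = 0
  · rw [if_pos, if_pos]
    · show (x.1 0).val = 0
      rw [h0, ZMod.val_zero]
    · refine ⟨fun i hi => absurd hi (by omega), fun _ hne => ?_⟩
      exact absurd h0 hne
  · have hval : ¬((x.1 0).val = 0) := fun h => h0 ((ZMod.val_eq_zero _).1 h)
    rw [if_neg hval]
    have hadd : (x.1 0 + 1).val = ((x.1 0).val + 1) % d := by
      rw [ZMod.val_add]
      congr 1
      rw [ZMod.val_one_eq_one_mod, Nat.mod_eq_of_lt hd]
    by_cases harc : fibArc d 1 x.1 y.1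
    · have hy : y.1 0 = x.1 0 + 1 := harc.2 (by omega) h0
      rw [if_pos harc, if_pos]
      show (y.1 0).val = ((x.1 0).val + 1) % d
      rw [hy, hadd]
    · rw [if_neg harc, if_neg]
      intro hval2
      apply harc
      refine ⟨fun i hi => absurd hi (by omega), fun _ _ => ?_⟩
      show y.1 0 = x.1 0 + 1
      apply ZMod.val_injective
      rw [hadd]
      exact hval2

/-- for l ≥ 1, the number of closed l-walks of F(d,k) equals
that of T_d, i.e. tr(A(k)^l) = tr(R^l). -/
theorem fib_closed_walks_eq (d k l : ℕ) [NeZero d] (hd : 2 ≤ d) (hk : 1 ≤ k)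
    (hl : 1 ≤ l) :
    Matrix.trace (fibAdjMatrix d k ^ l) = Matrix.trace (tMat d ^ l) := by
  obtain ⟨m, rfl⟩ : ∃ m, l = m + 1 := ⟨l - 1, by omega⟩
  obtain ⟨k', rfl⟩ : ∃ k'', k = k'' + 1 := ⟨k - 1, by omega⟩
  clear hk hl
  induction k' with
  | zero =>
      have hbase : fibAdjMatrix d 1 = (tMat d).submatrix (epsEquiv d) (epsEquiv d) := by
        ext x y
        exact base_entry d hd x y
      rw [hbase]
      exact trace_pow_submatrix (tMat d) (epsEquiv d) (m + 1)
  | succ n ih =>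
      calc Matrix.trace (fibAdjMatrix d (n + 2) ^ (m + 1))
          = Matrix.trace ((cMat d (n + 1) * bMat d (n + 1)) ^ (m + 1)) := by
            rw [cMat_mul_bMat]
        _ = Matrix.trace ((bMat d (n + 1) * cMat d (n + 1)) ^ (m + 1)) :=
            trace_pow_mul_comm (cMat d (n + 1)) (bMat d (n + 1)) m
        _ = Matrix.trace (fibAdjMatrix d (n + 1) ^ (m + 1)) := by
            rw [bMat_mul_cMat]
        _ = _ := ih
end

section
/- For integers d ≥ 2 and k ≥ 1, let C_l(d,k) = tr(A(k)^l) denote the total number of closed l-walks in the d-Fibonacci digraph F(d,k). Then for every integer l ≥ d, C_{l+1}(d,k) = C_l(d,k) + C_{l−1}(d,k) + ⋯ + C_{l−d+1}(d,k), the same linear recurrence as the d-step Fibonacci numbers. -/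
attribute [local instance] Classical.propDecidable

/-- C_l(d,k) = tr(A(k)^l): the total number of closed l-walks in F(d,k). -/
noncomputable def fibClosedWalks (d k : ℕ) [NeZero d] (l : ℕ) : ℤ :=
  Matrix.trace (fibAdjMatrix d k ^ l)


----------------------------------------------------------------
-- Part A: the order-1 matrix and its explicit power formulas
----------------------------------------------------------------

noncomputable def Mk1 (d : ℕ) [NeZero d] : Matrix (ZMod d) (ZMod d) ℤ :=
  fun a b => if a ≠ 0 → b = a + 1 then 1 else 0

noncomputable def cvec (d : ℕ) [NeZero d] (s : ℕ) (b : ZMod d) : ℤ :=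
  2 ^ s - if b ≠ 0 ∧ b.val ≤ s then 2 ^ (s - b.val) else 0

noncomputable def rfun (d : ℕ) [NeZero d] (a : ZMod d) : ℕ :=
  if a = 0 then 0 else d - a.val

theorem cvec_step {d : ℕ} [NeZero d] (hd : 2 ≤ d) (m : ℕ) (hm : m + 1 ≤ d - 1) (b : ZMod d) :
    cvec d (m+1) b = 2 * cvec d m b - (if b = (1 + m : ℕ) then 1 else 0) := by
  unfold cvec
  have hval : ((1 + m : ℕ) : ZMod d).val = 1 + m := ZMod.val_natCast_of_lt (by omega)
  by_cases hb : b = ((1 + m : ℕ) : ZMod d)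
  · subst hb
    rw [if_pos rfl]
    have h0 : ((1 + m : ℕ) : ZMod d) ≠ 0 := by
      intro h; rw [h, ZMod.val_zero] at hval; omega
    rw [if_pos ⟨h0, by omega⟩, if_neg (by rw [hval]; omega)]
    rw [hval]
    have : m + 1 - (1 + m) = 0 := by omega
    rw [this]
    ring
  · rw [if_neg hb]
    have hbv : b.val ≠ m + 1 := by
      intro h
      apply hb
      rw [← ZMod.natCast_zmod_val b, h, Nat.add_comm]
    by_cases hc : b ≠ 0 ∧ b.val ≤ m
    · rw [if_pos hc, if_pos ⟨hc.1, by omega⟩]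
      have : m + 1 - b.val = (m - b.val) + 1 := by omega
      rw [this]; ring
    · rw [if_neg hc, if_neg (by push_neg at hc ⊢; intro h1; have := hc h1; omega)]
      ring

theorem cvec_total {d : ℕ} [NeZero d] (hd : 2 ≤ d) (p : ℕ) (hp1 : 1 ≤ p) (hp2 : p ≤ d) (b : ZMod d) :
    cvec d (p-1) b = (∑ s ∈ Finset.range (p-1), cvec d s b)
      + (if b = 0 ∨ p ≤ b.val then 1 else 0) := by
  have hsplit : ∀ n : ℕ, ∑ s ∈ Finset.range n, cvec d s b
      = (2^n - 1) - (if b ≠ 0 ∧ b.val + 1 ≤ n then 2^(n - b.val) - 1 else 0) := by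
    intro n
    induction n with
    | zero => simp [cvec]
    | succ n ih =>
      rw [Finset.sum_range_succ, ih]
      unfold cvec
      
      by_cases h0 : b = 0
      · simp only [h0, ne_eq, not_true_eq_false, false_and, if_neg, if_false]
        push_cast; ring
      · by_cases h1 : b.val ≤ n
        · by_cases h2 : b.val + 1 ≤ n
          · rw [if_pos ⟨h0, h2⟩, if_pos ⟨h0, h1⟩, if_pos ⟨h0, by omega⟩]
            have e1 : n + 1 - b.val = (n - b.val) + 1 := by omega
            rw [e1]; ring
          · rw [if_neg (fun h => h2 h.2), if_pos ⟨h0, h1⟩, if_pos ⟨h0, by omega⟩]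
            have e1 : n + 1 - b.val = 1 := by omega
            have e2 : n - b.val = 0 := by omega
            rw [e1, e2]; ring
        · rw [if_neg (fun h => h1 (by omega)), if_neg (fun h => h1 h.2),
            if_neg (fun h => h1 (by omega))]
          ring
  rw [hsplit]
  unfold cvec
  have hvlt : b.val < d := ZMod.val_lt b
  by_cases h0 : b = 0
  · simp only [h0, ZMod.val_zero, ne_eq, not_true_eq_false, false_and, if_neg, if_false, eq_self_iff_true]
    rw [if_pos (Or.inl trivial)]
    ring
  · by_cases h1 : b.val ≤ p - 1
    · rw [if_pos ⟨h0, h1⟩]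
      by_cases h2 : b.val + 1 ≤ p - 1
      · rw [if_pos ⟨h0, h2⟩, if_neg (by
          rintro (h | h); exact h0 h; omega)]
        have e1 : p - 1 - b.val = (p - 1 - b.val) := rfl
        ring
      · -- b.val = p - 1
        rw [if_neg (fun h => h2 h.2), if_neg (by rintro (h | h); exact h0 h; omega)]
        have e2 : p - 1 - b.val = 0 := by omega
        rw [e2]; ring
    · rw [if_neg (fun h => h1 h.2), if_neg (fun h => h1 (by omega)),
        if_pos (Or.inr (by omega))]
      ring

theorem Mk1_apply_ne {d : ℕ} [NeZero d] (a b : ZMod d) (ha : a ≠ 0) :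
    Mk1 d a b = if b = a + 1 then 1 else 0 := by
  unfold Mk1; by_cases h : b = a + 1 <;> simp [h, ha]

theorem Mk1_apply_zero {d : ℕ} [NeZero d] (b : ZMod d) : Mk1 d 0 b = 1 := by simp [Mk1]

theorem Mk1_colsum {d : ℕ} [NeZero d] (hd : 2 ≤ d) (t : ZMod d) :
    ∑ a, Mk1 d a t = if t = 1 then 1 else 2 := by
  have h1 : (1 : ZMod d) ≠ 0 := by
    have := ZMod.val_one_eq_one_mod d
    intro h
    have : (1 : ZMod d).val = 0 := by rw [h, ZMod.val_zero]
    rw [ZMod.val_one_eq_one_mod, Nat.mod_eq_of_lt (by omega)] at this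
    omega
  classical
  rw [← Finset.sum_filter_add_sum_filter_not Finset.univ (fun a => a = 0)]
  have e0 : Finset.filter (fun a => a = (0:ZMod d)) Finset.univ = {0} := by
    ext a; simp
  rw [e0, Finset.sum_singleton, Mk1_apply_zero]
  have e1 : ∀ a ∈ Finset.filter (fun a => ¬a = (0:ZMod d)) Finset.univ,
      Mk1 d a t = if t = a + 1 then 1 else 0 := by
    intro a ha; simp at ha; exact Mk1_apply_ne a t ha
  rw [Finset.sum_congr rfl e1]
  by_cases ht : t = 1
  · rw [if_pos ht]
    subst ht
    have e2 : ∀ a ∈ Finset.filter (fun a => ¬a = (0:ZMod d)) Finset.univ,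
        (if (1:ZMod d) = a + 1 then (1:ℤ) else 0) = 0 := by
      intro a ha; simp only [Finset.mem_filter] at ha
      rw [if_neg]; intro h
      exact ha.2 (by linear_combination -h)
    rw [Finset.sum_congr rfl e2, Finset.sum_const_zero]; ring
  · rw [if_neg ht, Finset.sum_eq_single (t - 1)]
    · rw [if_pos (by ring)]; ring
    · intro a ha hne
      rw [if_neg]; intro h; exact hne (by rw [h]; ring)
    · intro h; simp only [Finset.mem_filter, Finset.mem_univ, true_and] at h
      push_neg at h
      exact absurd (by rw [sub_eq_zero] at h; linear_combination h : t = 1) ht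


section
variable {d : ℕ} [NeZero d] (hd : 2 ≤ d)
include hd

theorem val_one' : (1 : ZMod d).val = 1 := by
  rw [ZMod.val_one_eq_one_mod, Nat.mod_eq_of_lt (by omega)]

theorem rfun_pos (a : ZMod d) (ha : a ≠ 0) : 1 ≤ rfun d a := by
  unfold rfun; rw [if_neg ha]
  have := ZMod.val_lt a; omega

theorem rfun_lt (a : ZMod d) : rfun d a ≤ d - 1 := by
  unfold rfun; split_ifs with h
  · omega
  · have : a.val ≠ 0 := (ZMod.val_ne_zero a).mpr h
    omega

theorem succ_eq_zero_iff (a : ZMod d) (ha : a ≠ 0) : a + 1 = 0 ↔ rfun d a = 1 := by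
  have hv : a.val ≠ 0 := (ZMod.val_ne_zero a).mpr ha
  have hvlt : a.val < d := ZMod.val_lt a
  unfold rfun; rw [if_neg ha]
  constructor
  · intro h
    have : (a + 1).val = 0 := by rw [h, ZMod.val_zero]
    rcases Nat.lt_or_ge (a.val + 1) d with hc | hc
    · rw [ZMod.val_add_of_lt (by rw [val_one' hd]; omega), val_one' hd] at this
      omega
    · omega
  · intro h
    have hva : a.val = d - 1 := by omega
    have : a = ((d - 1 : ℕ) : ZMod d) := by
      rw [← hva, ZMod.natCast_zmod_val]
    have h2 : ((d - 1 : ℕ) : ZMod d) + 1 = 0 := by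
      have h3 : ((d - 1 + 1 : ℕ) : ZMod d) = 0 := by
        rw [(by omega : d - 1 + 1 = d), ZMod.natCast_self]
      rw [Nat.cast_add, Nat.cast_one] at h3
      exact h3
    rw [this]; exact h2

theorem rfun_succ (a : ZMod d) (ha : a ≠ 0) (ha1 : a + 1 ≠ 0) :
    rfun d (a + 1) = rfun d a - 1 ∧ 2 ≤ rfun d a := by
  have hv : a.val ≠ 0 := (ZMod.val_ne_zero a).mpr ha
  have hvlt : a.val < d := ZMod.val_lt a
  have hr : rfun d a ≠ 1 := fun h => ha1 ((succ_eq_zero_iff hd a ha).mpr h)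
  have hrge : 2 ≤ rfun d a := by
    have := rfun_pos hd a ha; omega
  have hru : rfun d a = d - a.val := by unfold rfun; rw [if_neg ha]
  have hva : a.val + 1 < d := by rw [hru] at hrge; omega
  have hvs : (a + 1).val = a.val + 1 := by
    rw [ZMod.val_add_of_lt (by rw [val_one' hd]; omega), val_one' hd]
  refine ⟨?_, hrge⟩
  unfold rfun
  rw [if_neg ha1, if_neg ha, hvs]
  omega

theorem key : ∀ m, 1 ≤ m → m ≤ d →
    (∀ a b, (Mk1 d ^ m) a b =
      if m ≤ rfun d a then (if b = a + (m : ZMod d) then 1 else 0)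
      else cvec d (m - 1 - rfun d a) b) ∧
    (m ≤ d - 1 → ∀ b, ∑ a, (Mk1 d ^ m) a b = cvec d m b) := by
  intro m
  induction m with
  | zero => omega
  | succ m ih =>
    intro _ hmd
    rcases Nat.eq_zero_or_pos m with hm0 | hm1
    · -- base case m+1 = 1
      subst hm0
      constructor
      · intro a b
        rw [pow_one]
        by_cases ha : a = 0
        · subst ha
          rw [if_neg (by rw [rfun]; simp), Mk1_apply_zero]
          simp [cvec]
        · rw [if_pos (rfun_pos hd a ha), Mk1_apply_ne a b ha, Nat.cast_one]
      · intro _ b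
        rw [Finset.sum_congr rfl (fun a _ => by rw [pow_one]), Mk1_colsum hd b]
        unfold cvec
        have hv1 : (1 : ZMod d).val = 1 := val_one' hd
        by_cases hb : b = 1
        · subst hb
          rw [if_pos rfl, if_pos ⟨(by intro h; rw [h, ZMod.val_zero] at hv1; omega), by omega⟩]
          rw [hv1]; norm_num
        · rw [if_neg hb, if_neg (by
            rintro ⟨h0, h1⟩
            have hb1 : b.val = 1 := by
              have := (ZMod.val_ne_zero b).mpr h0; omega
            exact hb (by rw [← ZMod.natCast_zmod_val b, hb1, Nat.cast_one]))]
          norm_num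
    · -- inductive step
      obtain ⟨ihi, ihc⟩ := ih hm1 (by omega)
      have hstep : ∀ a b, (Mk1 d ^ (m + 1)) a b = ∑ t, Mk1 d a t * (Mk1 d ^ m) t b := by
        intro a b
        rw [pow_succ', Matrix.mul_apply]
      have hrow : ∀ (a : ZMod d) b, a ≠ 0 → (Mk1 d ^ (m+1)) a b = (Mk1 d ^ m) (a+1) b := by
        intro a b ha
        rw [hstep, Finset.sum_eq_single (a+1)]
        · rw [Mk1_apply_ne _ _ ha, if_pos rfl, one_mul]
        · intro t _ hne
          rw [Mk1_apply_ne _ _ ha, if_neg hne, zero_mul]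
        · intro h; exact absurd (Finset.mem_univ _) h
      constructor
      · intro a b
        by_cases ha : a = 0
        · subst ha
          have : (Mk1 d ^ (m+1)) 0 b = ∑ t, (Mk1 d ^ m) t b := by
            rw [hstep]
            exact Finset.sum_congr rfl (fun t _ => by rw [Mk1_apply_zero, one_mul])
          rw [this, ihc (by omega) b]
          rw [if_neg (by simp [rfun])]
          simp [rfun]
        · by_cases ha1 : a + 1 = 0
          · have hr1 : rfun d a = 1 := (succ_eq_zero_iff hd a ha).mp ha1
            rw [hrow a b ha, ha1]
            have h0 : (Mk1 d ^ m) 0 b = cvec d (m - 1) b := by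
              rw [ihi 0 b, if_neg (show ¬(m ≤ rfun d 0) by simp [rfun]; omega)]
              simp [rfun]
            rw [h0, if_neg (show ¬(m + 1 ≤ rfun d a) by omega)]
            congr 1
            omega
          · obtain ⟨hrs, hr2⟩ := rfun_succ hd a ha ha1
            rw [hrow a b ha, ihi (a+1) b, hrs]
            by_cases hle : m ≤ rfun d a - 1
            · rw [if_pos hle, if_pos (show m + 1 ≤ rfun d a by omega)]
              have e : a + 1 + (m : ℕ) = a + ((m + 1 : ℕ) : ZMod d) := by
                push_cast; ring
              rw [e]
            · rw [if_neg hle, if_neg (show ¬(m + 1 ≤ rfun d a) by omega)]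
              congr 1
              omega
      · intro hm1d b
        have swap : ∑ a, (Mk1 d ^ (m+1)) a b = ∑ t, (∑ a, Mk1 d a t) * (Mk1 d ^ m) t b := by
          rw [Finset.sum_congr rfl (fun a _ => hstep a b), Finset.sum_comm]
          exact Finset.sum_congr rfl (fun t _ => by rw [Finset.sum_mul])
        rw [swap]
        have colM : ∀ t : ZMod d, (∑ a, Mk1 d a t) * (Mk1 d ^ m) t b
            = 2 * (Mk1 d ^ m) t b - (if t = 1 then 1 else 0) * (Mk1 d ^ m) t b := by
          intro t
          rw [Mk1_colsum hd t]
          split_ifs <;> ring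
        rw [Finset.sum_congr rfl (fun t _ => colM t), Finset.sum_sub_distrib]
        have e1 : ∑ t, (2:ℤ) * (Mk1 d ^ m) t b = 2 * cvec d m b := by
          rw [← Finset.mul_sum, ihc (by omega) b]
        have e2 : ∑ t, (if t = (1:ZMod d) then (1:ℤ) else 0) * (Mk1 d ^ m) t b
            = (Mk1 d ^ m) 1 b := by
          rw [Finset.sum_eq_single 1]
          · rw [if_pos rfl, one_mul]
          · intro t _ hne; rw [if_neg hne, zero_mul]
          · intro h; exact absurd (Finset.mem_univ _) h
        rw [e1, e2]
        have h1ne : (1 : ZMod d) ≠ 0 := by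
          intro h
          have := val_one' hd
          rw [h, ZMod.val_zero] at this; omega
        have hM1 : (Mk1 d ^ m) 1 b = if b = ((1 + m : ℕ) : ZMod d) then 1 else 0 := by
          rw [ihi 1 b, if_pos (by
            unfold rfun; rw [if_neg h1ne, val_one' hd]; omega)]
          congr 2
          push_cast; ring
        rw [hM1, ← cvec_step hd m (by omega) b]

theorem indicator_sum (a b : ZMod d) :
    ∑ i ∈ Finset.range (rfun d a + 1), (if b = a + (i : ZMod d) then (1:ℤ) else 0)
      = if b = 0 ∨ d - rfun d a ≤ b.val then 1 else 0 := by
  have hbv : b.val < d := ZMod.val_lt b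
  have hcast : ∀ i : ℕ, a + (i : ZMod d) = ((a.val + i : ℕ) : ZMod d) := by
    intro i
    conv_lhs => rw [← ZMod.natCast_zmod_val a]
    rw [← Nat.cast_add]
  have hbeq : ∀ n : ℕ, (b = (n : ZMod d)) ↔ b.val = n % d := by
    intro n
    constructor
    · intro h; rw [h, ZMod.val_natCast]
    · intro h; rw [← ZMod.natCast_zmod_val b, h, ZMod.natCast_mod]
  by_cases ha : a = 0
  · subst ha
    have : rfun d 0 = 0 := by simp [rfun]
    rw [this]
    simp only [zero_add, Finset.range_one, Finset.sum_singleton, Nat.cast_zero, add_zero,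
      Nat.sub_zero]
    by_cases hb : b = 0
    · rw [if_pos hb, if_pos (Or.inl hb)]
    · rw [if_neg hb, if_neg (by
        rintro (h | h)
        · exact hb h
        · have := ZMod.val_lt b; omega)]
  · have hav0 : a.val ≠ 0 := (ZMod.val_ne_zero a).mpr ha
    have hva : a.val < d := ZMod.val_lt a
    have hr : rfun d a = d - a.val := by simp [rfun, ha]
    have hp : d - rfun d a = a.val := by omega
    rw [hp]
    by_cases hb0 : b = 0
    · subst hb0
      rw [if_pos (Or.inl rfl)]
      rw [Finset.sum_eq_single (rfun d a)]
      · rw [if_pos]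
        rw [hcast, hr, (by omega : a.val + (d - a.val) = d), ZMod.natCast_self]
      · intro i hi hne
        rw [Finset.mem_range] at hi
        rw [if_neg]
        rw [hcast, hbeq, ZMod.val_zero]
        have : a.val + i < d := by omega
        rw [Nat.mod_eq_of_lt this]
        omega
      · intro h; exact absurd (Finset.self_mem_range_succ _) h
    · by_cases hbp : a.val ≤ b.val
      · rw [if_pos (Or.inr hbp)]
        rw [Finset.sum_eq_single (b.val - a.val)]
        · rw [if_pos]
          rw [hcast, (by omega : a.val + (b.val - a.val) = b.val), ZMod.natCast_zmod_val]
        · intro i hi hne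
          rw [Finset.mem_range] at hi
          rw [if_neg]
          rw [hcast, hbeq]
          rcases Nat.lt_or_ge (a.val + i) d with hc | hc
          · rw [Nat.mod_eq_of_lt hc]; omega
          · have : a.val + i = d := by omega
            rw [this, Nat.mod_self]
            have := (ZMod.val_ne_zero b).mpr hb0
            omega
        · intro h
          rw [Finset.mem_range] at h
          omega
      · rw [if_neg (by rintro (h | h); exact hb0 h; omega)]
        apply Finset.sum_eq_zero
        intro i hi
        rw [Finset.mem_range] at hi
        rw [if_neg]
        rw [hcast, hbeq]
        rcases Nat.lt_or_ge (a.val + i) d with hc | hc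
        · rw [Nat.mod_eq_of_lt hc]; omega
        · have : a.val + i = d := by omega
          rw [this, Nat.mod_self]
          have := (ZMod.val_ne_zero b).mpr hb0
          omega

theorem Mk1_pow_d : Mk1 d ^ d = ∑ i ∈ Finset.range d, Mk1 d ^ i := by
  ext a b
  rw [Matrix.sum_apply]
  have hr1 : rfun d a ≤ d - 1 := rfun_lt hd a
  set r := rfun d a with hrdef
  -- LHS
  rw [(key hd d (by omega) le_rfl).1 a b, if_neg (by omega)]
  -- RHS: split the range
  have hsplit : Finset.range d = Finset.range (r + 1) ∪ Finset.Ico (r + 1) d := by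
    rw [Finset.range_eq_Ico, Finset.range_eq_Ico]
    exact (Finset.Ico_union_Ico_eq_Ico (a := 0) (b := r + 1) (c := d) (by omega) (by omega)).symm
  rw [hsplit, Finset.sum_union (by
    rw [Finset.range_eq_Ico]
    exact Finset.Ico_disjoint_Ico_consecutive 0 (r+1) d)]
  have e1 : ∀ i ∈ Finset.range (r + 1), (Mk1 d ^ i) a b = if b = a + (i : ZMod d) then 1 else 0 := by
    intro i hi
    rw [Finset.mem_range] at hi
    rcases Nat.eq_zero_or_pos i with h0 | h1
    · subst h0
      rw [pow_zero, Matrix.one_apply, Nat.cast_zero, add_zero]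
      exact if_congr eq_comm rfl rfl
    · rw [(key hd i h1 (by omega)).1 a b, if_pos (by omega)]
  have e2 : ∀ i ∈ Finset.Ico (r + 1) d, (Mk1 d ^ i) a b = cvec d (i - 1 - r) b := by
    intro i hi
    rw [Finset.mem_Ico] at hi
    rw [(key hd i (by omega) (by omega)).1 a b, if_neg (by omega)]
  rw [Finset.sum_congr rfl e1, Finset.sum_congr rfl e2, indicator_sum hd a b]
  have e3 : ∑ i ∈ Finset.Ico (r + 1) d, cvec d (i - 1 - r) b
      = ∑ s ∈ Finset.range (d - 1 - r), cvec d s b := by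
    rw [Finset.sum_Ico_eq_sum_range, (by omega : d - (r + 1) = d - 1 - r)]
    exact Finset.sum_congr rfl (fun s _ => by congr 1; omega)
  rw [e3]
  have hfin := cvec_total hd (d - r) (by omega) (by omega) b
  rw [(by omega : d - r - 1 = d - 1 - r)] at hfin
  rw [hfin]
  ring
end


section
variable (d : ℕ) [NeZero d]

abbrev FV (k : ℕ) := {x : Fin k → ZMod d // fibIsVertex d k x}

noncomputable instance (k : ℕ) : Fintype (FV d k) := by
  classical
  exact Subtype.fintype _

def tailV {k : ℕ} (y : FV d (k+1)) : FV d k :=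
  ⟨fun i => y.1 ⟨i.1, by omega⟩, by
    intro i h hne
    exact y.2 i (by omega) hne⟩

def headV {k : ℕ} (y : FV d (k+1)) : FV d k :=
  ⟨fun i => y.1 ⟨i.1 + 1, by omega⟩, by
    intro i h hne
    exact y.2 (i+1) (by omega) hne⟩

theorem arc_iff_head_tail {j : ℕ} (x y : FV d (j+2)) :
    fibArc d (j+2) x.1 y.1 ↔ headV d x = tailV d y := by
  constructor
  · intro ⟨h1, _⟩
    apply Subtype.ext
    funext i
    exact (h1 i.1 (by omega)).symm
  · intro h
    have hfun := congrArg Subtype.val h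
    have hcomp : ∀ (i : ℕ) (hi : i < j+1), x.1 ⟨i+1, by omega⟩ = y.1 ⟨i, by omega⟩ :=
      fun i hi => congrFun hfun ⟨i, hi⟩
    constructor
    · intro i hi
      exact (hcomp i (by omega)).symm
    · intro _ hne
      -- j+2-1 = j+1 definitionally
      have hxk : x.1 ⟨j+1, by omega⟩ = y.1 ⟨j, by omega⟩ := hcomp j (by omega)
      have hne' : x.1 ⟨j+2-1, Nat.sub_lt (by omega) Nat.one_pos⟩ ≠ 0 := hne
      have hne'' : y.1 ⟨j, by omega⟩ ≠ 0 := by rw [← hxk]; exact hne'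
      have hyvert := y.2 j (by omega) hne''
      show y.1 ⟨j+1, by omega⟩ = x.1 ⟨j+1, by omega⟩ + 1
      rw [hxk]
      exact hyvert

def glueV {j : ℕ} (u v : FV d (j+1)) (harc : fibArc d (j+1) u.1 v.1) : FV d (j+2) :=
  ⟨fun i => if h : i.1 < j+1 then u.1 ⟨i.1, h⟩ else v.1 ⟨j, by omega⟩, by
    intro i h hne
    dsimp only at hne ⊢
    rw [dif_pos (show i < j+1 by omega)] at hne
    by_cases hik : i + 1 < j+1
    · rw [dif_pos hik, dif_pos (show i < j+1 by omega)]
      exact u.2 i hik hne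
    · have hik2 : i = j := by omega
      subst hik2
      rw [dif_neg (by omega), dif_pos (show i < i+1 by omega)]
      exact harc.2 (by omega) hne⟩

theorem tail_glue {j : ℕ} (u v : FV d (j+1)) (harc : fibArc d (j+1) u.1 v.1) :
    tailV d (glueV d u v harc) = u := by
  apply Subtype.ext
  funext i
  show (if h : i.1 < j+1 then u.1 ⟨i.1, h⟩ else v.1 ⟨j, by omega⟩) = u.1 i
  rw [dif_pos i.2]

theorem head_glue {j : ℕ} (u v : FV d (j+1)) (harc : fibArc d (j+1) u.1 v.1) :
    headV d (glueV d u v harc) = v := by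
  apply Subtype.ext
  funext i
  show (if h : i.1 + 1 < j+1 then u.1 ⟨i.1 + 1, h⟩ else v.1 ⟨j, by omega⟩) = v.1 i
  by_cases hik : i.1 + 1 < j + 1
  · rw [dif_pos hik]
    -- u ⟨i+1⟩ = v ⟨i⟩ from arc
    have := harc.1 i.1 (by omega)
    rw [(show (⟨i.1, by omega⟩ : Fin (j+1)) = i from Fin.ext rfl)] at this
    exact this.symm
  · rw [dif_neg hik]
    have hij : i = ⟨j, by omega⟩ := Fin.ext (show i.1 = j by have := i.isLt; omega)
    rw [hij]

theorem arc_of_tail_head {j : ℕ} (u v : FV d (j+1)) (y : FV d (j+2))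
    (ht : tailV d y = u) (hh : headV d y = v) : fibArc d (j+1) u.1 v.1 := by
  have htf : ∀ (i : ℕ) (hi : i < j+1), y.1 ⟨i, by omega⟩ = u.1 ⟨i, hi⟩ :=
    fun i hi => congrFun (congrArg Subtype.val ht) ⟨i, hi⟩
  have hhf : ∀ (i : ℕ) (hi : i < j+1), y.1 ⟨i+1, by omega⟩ = v.1 ⟨i, hi⟩ :=
    fun i hi => congrFun (congrArg Subtype.val hh) ⟨i, hi⟩
  constructor
  · intro i hi
    rw [← htf (i+1) (by omega), ← hhf i (by omega)]
  · intro _ hne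
    -- index j+1-1 = j
    have hne' : y.1 ⟨j, by omega⟩ ≠ 0 := by
      rw [htf j (by omega)]; exact hne
    have hyv := y.2 j (by omega) hne'
    show v.1 ⟨j, _⟩ = u.1 ⟨j, _⟩ + 1
    rw [← htf j (by omega), ← hhf j (by omega)]
    exact hyv

theorem glue_unique {j : ℕ} (u v : FV d (j+1)) (y : FV d (j+2))
    (ht : tailV d y = u) (hh : headV d y = v)
    (harc : fibArc d (j+1) u.1 v.1) : y = glueV d u v harc := by
  have htf : ∀ (i : ℕ) (hi : i < j+1), y.1 ⟨i, by omega⟩ = u.1 ⟨i, hi⟩ :=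
    fun i hi => congrFun (congrArg Subtype.val ht) ⟨i, hi⟩
  have hhf : ∀ (i : ℕ) (hi : i < j+1), y.1 ⟨i+1, by omega⟩ = v.1 ⟨i, hi⟩ :=
    fun i hi => congrFun (congrArg Subtype.val hh) ⟨i, hi⟩
  apply Subtype.ext
  funext i
  show y.1 i = if h : i.1 < j+1 then u.1 ⟨i.1, h⟩ else v.1 ⟨j, by omega⟩
  by_cases hik : i.1 < j+1
  · rw [dif_pos hik, ← htf i.1 hik]
  · rw [dif_neg hik]
    have hij : i = ⟨j+1, by omega⟩ := Fin.ext (show i.1 = j+1 by have := i.isLt; omega)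
    rw [hij, ← hhf j (by omega)]
end


section
variable {d : ℕ} [NeZero d] {V W : Type*} [Fintype V] [Fintype W] [DecidableEq V] [DecidableEq W]

theorem pow_factor (C : Matrix V W ℤ) (B : Matrix W V ℤ) :
    ∀ n : ℕ, (C * B)^(n+1) = C * ((B * C)^n * B)
  | 0 => by rw [pow_one, pow_zero, Matrix.one_mul]
  | n+1 => by
    rw [pow_succ, pow_factor C B n, pow_succ]
    simp only [Matrix.mul_assoc]

theorem trace_CB_BC (C : Matrix V W ℤ) (B : Matrix W V ℤ) (n : ℕ) :
    Matrix.trace ((C * B)^(n+1)) = Matrix.trace ((B * C)^(n+1)) := by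
  rw [pow_factor, Matrix.trace_mul_comm, pow_succ]
  simp only [Matrix.mul_assoc]

theorem trace_submatrix_pow (M : Matrix (ZMod d) (ZMod d) ℤ) (e : V ≃ ZMod d) (l : ℕ) :
    Matrix.trace ((M.submatrix e e)^l) = Matrix.trace (M^l) := by
  have hpow : ∀ n : ℕ, (M.submatrix e e)^n = (M^n).submatrix e e := by
    intro n
    induction n with
    | zero =>
      rw [pow_zero, pow_zero]
      ext i j
      rw [Matrix.submatrix_apply, Matrix.one_apply, Matrix.one_apply]
      exact if_congr (Iff.symm (Equiv.apply_eq_iff_eq e)) rfl rfl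
    | succ n ih =>
      rw [pow_succ, pow_succ, ih, Matrix.submatrix_mul_equiv]
  rw [hpow]
  simp only [Matrix.trace, Matrix.diag, Matrix.submatrix_apply]
  exact Equiv.sum_comp e (fun j => (M^l) j j)
end


----------------------------------------------------------------
-- Part B: line-digraph factorization and matrix B, C
----------------------------------------------------------------

section
variable (d : ℕ) [NeZero d]

noncomputable def Bmat (j : ℕ) : Matrix (FV d (j+1)) (FV d (j+2)) ℤ :=
  fun u y => if tailV d y = u then 1 else 0

noncomputable def Cmat (j : ℕ) : Matrix (FV d (j+2)) (FV d (j+1)) ℤ :=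
  fun y v => if headV d y = v then 1 else 0

theorem CB_eq (j : ℕ) : Cmat d j * Bmat d j = fibAdjMatrix d (j+2) := by
  ext x y
  rw [Matrix.mul_apply]
  unfold Cmat Bmat fibAdjMatrix
  rw [Finset.sum_eq_single (headV d x)]
  · rw [if_pos rfl, one_mul]
    by_cases h : fibArc d (j+2) x.1 y.1
    · rw [if_pos ((arc_iff_head_tail d x y).mp h).symm, if_pos h]
    · rw [if_neg (fun he => h ((arc_iff_head_tail d x y).mpr he.symm)), if_neg h]
  · intro u _ hne
    rw [if_neg (fun he => hne he.symm), zero_mul]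
  · intro h
    exact absurd (Finset.mem_univ _) h

theorem BC_eq (j : ℕ) : Bmat d j * Cmat d j = fibAdjMatrix d (j+1) := by
  ext u v
  rw [Matrix.mul_apply]
  unfold Cmat Bmat fibAdjMatrix
  by_cases harc : fibArc d (j+1) u.1 v.1
  · rw [if_pos harc, Finset.sum_eq_single (glueV d u v harc)]
    · rw [if_pos (tail_glue d u v harc), if_pos (head_glue d u v harc), one_mul]
    · intro y _ hne
      by_cases hP : tailV d y = u
      · by_cases hQ : headV d y = v
        · exact absurd (glue_unique d u v y hP hQ harc) hne
        · rw [if_neg hQ, mul_zero]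
      · rw [if_neg hP, zero_mul]
    · intro h
      exact absurd (Finset.mem_univ _) h
  · rw [if_neg harc]
    apply Finset.sum_eq_zero
    intro y _
    by_cases hP : tailV d y = u
    · by_cases hQ : headV d y = v
      · exact absurd (arc_of_tail_head d u v y hP hQ) harc
      · rw [if_neg hQ, mul_zero]
    · rw [if_neg hP, zero_mul]

theorem trace_pow_eq_one (k : ℕ) (hk : 1 ≤ k) (l : ℕ) (hl : 1 ≤ l) :
    Matrix.trace (fibAdjMatrix d k ^ l) = Matrix.trace (fibAdjMatrix d 1 ^ l) := by
  induction k with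
  | zero => omega
  | succ k ih =>
    rcases Nat.eq_zero_or_pos k with h0 | h1
    · subst h0; rfl
    · obtain ⟨j, rfl⟩ : ∃ j, k = j + 1 := ⟨k - 1, by omega⟩
      obtain ⟨n, rfl⟩ : ∃ n, l = n + 1 := ⟨l - 1, by omega⟩
      rw [← CB_eq d j, trace_CB_BC, BC_eq d j]
      exact ih h1

noncomputable def eV1 : FV d 1 ≃ ZMod d where
  toFun := fun x => x.1 ⟨0, by omega⟩
  invFun := fun b => ⟨fun _ => b, fun i h => absurd h (by omega)⟩
  left_inv := fun x => Subtype.ext (funext fun i => congrArg x.1 (Subsingleton.elim _ i))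
  right_inv := fun b => rfl

theorem adj_one_eq : fibAdjMatrix d 1 = (Mk1 d).submatrix (eV1 d) (eV1 d) := by
  ext x y
  rw [Matrix.submatrix_apply]
  unfold fibAdjMatrix Mk1 eV1
  apply if_congr _ rfl rfl
  constructor
  · intro h hne
    exact h.2 (by omega) hne
  · intro h
    exact ⟨fun i hi => absurd hi (by omega), fun _ hne => h hne⟩

end

theorem fib_closed_walks_eq_Mk1 (d k : ℕ) [NeZero d] (hk : 1 ≤ k) (m : ℕ) (hm : 1 ≤ m) :
    fibClosedWalks d k m = Matrix.trace (Mk1 d ^ m) := by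
  unfold fibClosedWalks
  rw [trace_pow_eq_one d k hk m hm, adj_one_eq, trace_submatrix_pow]

/-- for l ≥ d, C_{l+1}(d,k) = C_l(d,k) + ⋯ + C_{l−d+1}(d,k). -/
theorem fib_closed_walks_recurrence (d k : ℕ) [NeZero d] (hd : 2 ≤ d) (hk : 1 ≤ k)
    (l : ℕ) (hl : d ≤ l) :
    fibClosedWalks d k (l + 1) = ∑ i ∈ Finset.range d, fibClosedWalks d k (l - i) := by
  have hM : Mk1 d ^ (l+1) = ∑ i ∈ Finset.range d, Mk1 d ^ (l - i) := by
    calc Mk1 d ^ (l+1)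
        = ∑ i ∈ Finset.range d, Mk1 d ^ (l+1-d) * Mk1 d ^ i := by
          rw [← Finset.mul_sum, ← Mk1_pow_d hd, ← pow_add,
            (by omega : l+1-d+d = l+1)]
      _ = ∑ i ∈ Finset.range d, Mk1 d ^ (l - i) := by
          rw [← Finset.sum_range_reflect (fun i => Mk1 d ^ (l - i)) d]
          apply Finset.sum_congr rfl
          intro i hi
          rw [Finset.mem_range] at hi
          rw [← pow_add]
          congr 1
          omega
  have h2 : ∑ i ∈ Finset.range d, fibClosedWalks d k (l - i)
      = ∑ i ∈ Finset.range d, Matrix.trace (Mk1 d ^ (l - i)) :=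
    Finset.sum_congr rfl (fun i hi => by
      rw [Finset.mem_range] at hi
      exact fib_closed_walks_eq_Mk1 d k hk (l-i) (by omega))
  rw [fib_closed_walks_eq_Mk1 d k hk (l+1) (by omega), h2, ← Matrix.trace_sum, ← hM]
end

section
/- For integers d ≥ 2 and k ≥ 1, the per-last-digit vertex counts of F(d,k) satisfy: n_0^{k+1} = n_0^k + n_{d−1}^k; n_1^{k+1} = n_0^k; and n_j^{k+1} = n_0^k + n_{j−1}^k for every j with 2 ≤ j ≤ d−1. Equivalently, the row vector n^{k+1} = (n_0^{k+1}, …, n_{d−1}^{k+1}) equals n^k · R, where R is the adjacency matrix of T_d. -/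
/-!
A vertex of `F(d,k)` is exactly a walk with `k` vertices in `T_d`. Removing the last vertex of a
walk ending at `j` leaves a walk ending at an in-neighbour of `j`, so the number of walks ending at
`j` is the sum, over the in-neighbours `i` of `j`, of the number of one-shorter walks ending at `i`:
`n^{k+1} = n^k R`. In `T_d` the in-neighbours of `j` are `0` and `j - 1`, which coincide for `j = 1`.
-/

section Walks

variable {α : Type*} (r : α → α → Prop)

def IsWalk {n : ℕ} (x : Fin (n + 1) → α) : Prop :=
  ∀ i : Fin n, r (x i.castSucc) (x i.succ)

/-- Walks with `n` arcs, i.e. `n + 1` vertices, ending at `j`. -/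
noncomputable def walkCount (n : ℕ) (j : α) : ℕ :=
  Nat.card {x : Fin (n + 1) → α // IsWalk r x ∧ x (Fin.last n) = j}

variable {r}

theorem isWalk_snoc {n : ℕ} {y : Fin (n + 1) → α} {a : α} :
    IsWalk r (Fin.snoc y a : Fin (n + 2) → α) ↔ IsWalk r y ∧ r (y (Fin.last n)) a := by
  simp only [IsWalk, Fin.forall_fin_succ' (n := n), Fin.succ_castSucc, Fin.snoc_castSucc,
    Fin.succ_last, Fin.snoc_last]

theorem isWalk_iff_init {n : ℕ} {x : Fin (n + 2) → α} :
    IsWalk r x ↔ IsWalk r (Fin.init x) ∧ r (Fin.init x (Fin.last n)) (x (Fin.last (n + 1))) := by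
  conv_lhs => rw [← Fin.snoc_init_self x]
  exact isWalk_snoc

theorem walkCount_succ (n : ℕ) (j : α) :
    walkCount r (n + 1) j =
      Nat.card {y : Fin (n + 1) → α // IsWalk r y ∧ r (y (Fin.last n)) j} :=
  Nat.card_congr
    { toFun := fun x => ⟨Fin.init x.1, by obtain ⟨x, hx, rfl⟩ := x; exact isWalk_iff_init.1 hx⟩
      invFun := fun y => ⟨Fin.snoc y.1 j, isWalk_snoc.2 y.2, Fin.snoc_last _ _⟩
      left_inv := fun x => Subtype.ext <| by simp [← x.2.2]
      right_inv := fun y => Subtype.ext <| by simp }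

theorem walkCount_succ_eq_sum [Fintype α] [DecidableRel r] (n : ℕ) (j : α) :
    walkCount r (n + 1) j = ∑ i ∈ Finset.univ.filter (r · j), walkCount r n i := by
  classical
  rw [walkCount_succ]
  simp only [walkCount, Nat.card_eq_fintype_card, Fintype.card_subtype]
  rw [Finset.card_eq_sum_card_fiberwise (f := fun y => y (Fin.last n))
    (t := Finset.univ.filter (r · j))]
  · refine Finset.sum_congr rfl fun i hi => ?_
    rw [Finset.filter_filter]
    refine congrArg Finset.card (Finset.filter_congr fun y _ => ?_)
    rw [Finset.mem_filter_univ] at hi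
    exact ⟨fun ⟨⟨hy, _⟩, hyi⟩ => ⟨hy, hyi⟩, fun ⟨hy, hyi⟩ => ⟨⟨hy, hyi ▸ hi⟩, hyi⟩⟩
  · intro y hy
    rw [Finset.coe_filter_univ] at hy ⊢
    exact hy.2

end Walks

section FibonacciDigraph

/-- The arcs of `T_d`: `0 → b` for every `b`, and `a → a + 1`. -/
def tdAdj (d : ℕ) (a b : ZMod d) : Prop :=
  a ≠ 0 → b = a + 1

instance (d : ℕ) : DecidableRel (tdAdj d) :=
  fun a b => inferInstanceAs (Decidable (a ≠ 0 → b = a + 1))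

variable {d : ℕ}

theorem fibIsVertex_iff_isWalk {k : ℕ} {x : Fin (k + 1) → ZMod d} :
    fibIsVertex d (k + 1) x ↔ IsWalk (tdAdj d) x :=
  ⟨fun h i => h i (by omega), fun h i hi => h ⟨i, by omega⟩⟩

theorem fibNj_succ_eq_walkCount (k : ℕ) (j : ZMod d) :
    fibNj d (k + 1) j = walkCount (tdAdj d) k j :=
  Nat.card_congr <| Equiv.subtypeEquivRight fun x => by
    rw [fibIsVertex_iff_isWalk, forall_prop_of_true k.succ_pos]
    rfl

theorem filter_tdAdj [NeZero d] (j : ZMod d) :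
    Finset.univ.filter (tdAdj d · j) = {0, j - 1} := by
  ext i
  rw [Finset.mem_filter_univ]
  simp only [tdAdj, Finset.mem_insert, Finset.mem_singleton, eq_sub_iff_add_eq, eq_comm (b := j)]
  tauto

theorem walkCount_tdAdj_succ_of_ne_one [NeZero d] (n : ℕ) {j : ZMod d} (hj : j ≠ 1) :
    walkCount (tdAdj d) (n + 1) j = walkCount (tdAdj d) n 0 + walkCount (tdAdj d) n (j - 1) := by
  rw [walkCount_succ_eq_sum, filter_tdAdj, Finset.sum_pair]
  exact (sub_ne_zero.2 hj).symm

theorem walkCount_tdAdj_succ_one [NeZero d] (n : ℕ) :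
    walkCount (tdAdj d) (n + 1) (1 : ZMod d) = walkCount (tdAdj d) n 0 := by
  rw [walkCount_succ_eq_sum, filter_tdAdj, sub_self, Finset.pair_eq_singleton, Finset.sum_singleton]

end FibonacciDigraph

/-- the per-last-digit vertex counts satisfy
n_0^{k+1} = n_0^k + n_{d−1}^k, n_1^{k+1} = n_0^k, and
n_j^{k+1} = n_0^k + n_{j−1}^k for 2 ≤ j ≤ d−1 (i.e. n^{k+1} = n^k · R). -/
theorem fibNj_step (d k : ℕ) (hd : 2 ≤ d) (hk : 1 ≤ k) :
    fibNj d (k + 1) 0 = fibNj d k 0 + fibNj d k ((d - 1 : ℕ) : ZMod d) ∧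
    fibNj d (k + 1) 1 = fibNj d k 0 ∧
    ∀ j : ℕ, 2 ≤ j → j ≤ d - 1 →
      fibNj d (k + 1) (j : ZMod d) = fibNj d k 0 + fibNj d k ((j - 1 : ℕ) : ZMod d) := by
  obtain ⟨n, rfl⟩ : ∃ n, k = n + 1 := ⟨k - 1, by omega⟩
  have : NeZero d := ⟨by omega⟩
  have : Fact (1 < d) := ⟨by omega⟩
  simp only [fibNj_succ_eq_walkCount]
  refine ⟨?_, walkCount_tdAdj_succ_one n, fun j hj2 hjd => ?_⟩
  · rw [walkCount_tdAdj_succ_of_ne_one n zero_ne_one, Nat.cast_sub (by omega : 1 ≤ d),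
      ZMod.natCast_self, Nat.cast_one]
  · have hj1 : (j : ZMod d) ≠ 1 := by
      rw [← Nat.cast_one, Ne, ZMod.natCast_eq_natCast_iff', Nat.mod_eq_of_lt (by omega),
        Nat.mod_eq_of_lt (by omega)]
      omega
    rw [walkCount_tdAdj_succ_of_ne_one n hj1, Nat.cast_sub (by omega : 1 ≤ j), Nat.cast_one]
end
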